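/- arXiv:1708.07316 — 3 statements merged into one kernel-verified Lean document; each statement's English description precedes it below -/
import Mathlib

section
/- Let Φ be a reduced root system spanning V, and let Δ ⊆ Φ be a base. Let f : V∨ → V be the linear isomorphism determined by f(η(α∨)) = η(α) for all α ∈ Δ (sending each fundamental coweight to the corresponding fundamental weight). Then for every nonzero Δ-dominant μ ∈ V∨: μ is quasi-constant if and only if f(μ) is quasi-constant. Consequently, f induces a bijection between Δ-dominant quasi-constant rays (ℚ≥0-spans of nonzero vectors) in V∨ and Δ-dominant quasi-constant rays in V. -/
namespace QC

open Classical

variable {V : Type*} [AddCommGroup V] [Module ℚ V]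

/-- The contragredient action of a linear automorphism `w` of `V` on the dual space,
characterized by `⟨w x, coact w f⟩ = ⟨x, f⟩`, i.e. `(coact w f) x = f (w⁻¹ x)`. -/
noncomputable def coact (w : V ≃ₗ[ℚ] V) (f : Module.Dual ℚ V) : Module.Dual ℚ V :=
  w.symm.dualMap f

/-- The Weyl group of the data `(Φ, co)`: the subgroup of linear automorphisms of `V`
generated by the reflections `s_α : x ↦ x - ⟨x, α∨⟩ α` for `α ∈ Φ`. -/
def weylGroup (Φ : Set V) (co : V → Module.Dual ℚ V) : Subgroup (V ≃ₗ[ℚ] V) :=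
  Subgroup.closure { w : V ≃ₗ[ℚ] V | ∃ α ∈ Φ, ∀ x : V, w x = x - (co α x) • α }

/-- `χ ∈ V` is quasi-constant with respect to a group `G` of automorphisms
(typically the Weyl group, or `W ⋊ Γ`). -/
def IsQuasiConstantWrt (Φ : Set V) (co : V → Module.Dual ℚ V)
    (G : Subgroup (V ≃ₗ[ℚ] V)) (χ : V) : Prop :=
  ∀ α ∈ Φ, co α χ ≠ 0 → ∀ σ, σ ∈ G → coact σ (co α) χ / co α χ ∈ ({-1, 0, 1} : Set ℚ)

/-- `χ ∈ V` is quasi-constant (with respect to the Weyl group). -/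
def IsQuasiConstant (Φ : Set V) (co : V → Module.Dual ℚ V) (χ : V) : Prop :=
  IsQuasiConstantWrt Φ co (weylGroup Φ co) χ

/-- A coweight `μ ∈ V∨` is quasi-constant with respect to a group `G`. -/
def IsQuasiConstantCowtWrt (Φ : Set V) (G : Subgroup (V ≃ₗ[ℚ] V))
    (μ : Module.Dual ℚ V) : Prop :=
  ∀ α ∈ Φ, μ α ≠ 0 → ∀ σ, σ ∈ G → μ (σ α) / μ α ∈ ({-1, 0, 1} : Set ℚ)

/-- A coweight `μ ∈ V∨` is quasi-constant (with respect to the Weyl group). -/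
def IsQuasiConstantCowt (Φ : Set V) (co : V → Module.Dual ℚ V)
    (μ : Module.Dual ℚ V) : Prop :=
  IsQuasiConstantCowtWrt Φ (weylGroup Φ co) μ

/-- `χ ∈ V` is minuscule: `⟨χ, α∨⟩ ∈ {-1,0,1}` for all roots `α`. -/
def IsMinuscule (Φ : Set V) (co : V → Module.Dual ℚ V) (χ : V) : Prop :=
  ∀ α ∈ Φ, co α χ ∈ ({-1, 0, 1} : Set ℚ)

/-- `μ ∈ V∨` is minuscule: `⟨α, μ⟩ ∈ {-1,0,1}` for all roots `α`. -/
def IsMinusculeCowt (Φ : Set V) (μ : Module.Dual ℚ V) : Prop :=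
  ∀ α ∈ Φ, μ α ∈ ({-1, 0, 1} : Set ℚ)

/-- The weight lattice `P = {χ ∈ V : ⟨χ, β∨⟩ ∈ ℤ for all β ∈ Φ}`. -/
def weightLattice (Φ : Set V) (co : V → Module.Dual ℚ V) : Set V :=
  { χ | ∀ β ∈ Φ, ∃ n : ℤ, co β χ = (n : ℚ) }

/-- The coweight lattice `P∨ = {μ ∈ V∨ : ⟨α, μ⟩ ∈ ℤ for all α ∈ Φ}`. -/
def coweightLattice (Φ : Set V) : Set (Module.Dual ℚ V) :=
  { μ | ∀ α ∈ Φ, ∃ n : ℤ, μ α = (n : ℚ) }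

/-- `(Φ, co)` is a reduced root system (not necessarily spanning) in `V`, where
`co α` is the coroot `α∨` viewed as a linear functional, with the Weyl group acting
compatibly on roots and coroots. -/
structure IsRootSystem (Φ : Set V) (co : V → Module.Dual ℚ V) : Prop where
  finite : Φ.Finite
  ne_zero : ∀ α ∈ Φ, α ≠ 0
  pair_self : ∀ α ∈ Φ, co α α = 2
  refl_mem : ∀ α ∈ Φ, ∀ β ∈ Φ, β - (co α β) • α ∈ Φ
  pair_int : ∀ α ∈ Φ, ∀ β ∈ Φ, ∃ n : ℤ, co α β = (n : ℚ)
  reduced : ∀ α ∈ Φ, ∀ c : ℚ, c • α ∈ Φ → c = 1 ∨ c = -1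
  weyl_root : ∀ w, w ∈ weylGroup Φ co → ∀ α ∈ Φ, w α ∈ Φ
  weyl_coroot : ∀ w, w ∈ weylGroup Φ co → ∀ α ∈ Φ, co (w α) = coact w (co α)

/-- `Φ` is irreducible: it is nonempty and admits no nontrivial orthogonal decomposition. -/
def IsIrreducible (Φ : Set V) (co : V → Module.Dual ℚ V) : Prop :=
  Φ.Nonempty ∧ ∀ Ψ ⊆ Φ, (∀ α ∈ Ψ, ∀ β ∈ Φ \ Ψ, co α β = 0) → Ψ = ∅ ∨ Ψ = Φ

/-- `Δ` is a base (set of simple roots) of `Φ`. -/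
structure IsBase (Φ : Set V) (co : V → Module.Dual ℚ V) (Δ : Set V) : Prop where
  subset : Δ ⊆ Φ
  indep : LinearIndependent ℚ ((↑) : Δ → V)
  span_eq : Submodule.span ℚ Δ = Submodule.span ℚ Φ
  decomp : ∀ α ∈ Φ, ∃ c : V →₀ ℕ, ↑c.support ⊆ Δ ∧
      (α = c.sum (fun v n => (n : ℚ) • v) ∨ α = - c.sum (fun v n => (n : ℚ) • v))

/-- `η` is the fundamental weight `η(α)` for the simple root `α ∈ Δ`:
`⟨η, β∨⟩ = δ_{αβ}` for `β ∈ Δ`. -/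
def IsFundWeight (co : V → Module.Dual ℚ V) (Δ : Set V) (α : V) (η : V) : Prop :=
  ∀ β ∈ Δ, co β η = if β = α then 1 else 0

/-- `f` is the fundamental coweight `η(α∨)` for the simple root `α ∈ Δ`:
`⟨β, f⟩ = δ_{αβ}` for `β ∈ Δ`. -/
def IsFundCoweight (Δ : Set V) (α : V) (f : Module.Dual ℚ V) : Prop :=
  ∀ β ∈ Δ, f β = if β = α then 1 else 0

/-- `χ` is cominuscule: `χ = η(α)` for some base `Δ` and `α ∈ Δ` such that the
fundamental coweight `η(α∨)` is minuscule. -/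
def IsCominuscule (Φ : Set V) (co : V → Module.Dual ℚ V) (χ : V) : Prop :=
  χ ∈ Submodule.span ℚ Φ ∧
  ∃ Δ : Set V, IsBase Φ co Δ ∧ ∃ α ∈ Δ, IsFundWeight co Δ α χ ∧
    ∀ f : Module.Dual ℚ V, IsFundCoweight Δ α f → IsMinusculeCowt Φ f

/-- `μ` is a cominuscule coweight: `μ = η(α∨)` for some base `Δ` and `α ∈ Δ` such that
the fundamental weight `η(α)` is minuscule. -/
def IsCominusculeCowt (Φ : Set V) (co : V → Module.Dual ℚ V)
    (μ : Module.Dual ℚ V) : Prop :=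
  ∃ Δ : Set V, IsBase Φ co Δ ∧ ∃ α ∈ Δ, IsFundCoweight Δ α μ ∧
    ∀ η : V, IsFundWeight co Δ α η → IsMinuscule Φ co η

/-- `χ` is `Δ`-dominant. -/
def IsDominant (co : V → Module.Dual ℚ V) (Δ : Set V) (χ : V) : Prop :=
  ∀ α ∈ Δ, 0 ≤ co α χ

/-- `μ ∈ V∨` is `Δ`-dominant. -/
def IsDominantCowt (Δ : Set V) (μ : Module.Dual ℚ V) : Prop :=
  ∀ α ∈ Δ, 0 ≤ μ α

/-- `χ` is orbitally `p`-close. -/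
def IsOrbitallyPClose (Φ : Set V) (co : V → Module.Dual ℚ V) (p : ℕ) (χ : V) : Prop :=
  ∀ α ∈ Φ, co α χ ≠ 0 → ∀ w, w ∈ weylGroup Φ co →
    |coact w (co α) χ / co α χ| ≤ (p : ℚ) - 1

end QC

namespace QCAux
open QC Module

variable {V : Type*} [AddCommGroup V] [Module ℚ V]

/-- The reflection attached to `τ` as a linear map. -/
noncomputable def reflLM (co : V → Module.Dual ℚ V) (τ : V) : V →ₗ[ℚ] V :=
  LinearMap.id - (co τ).smulRight τ

theorem reflLM_apply (co : V → Module.Dual ℚ V) (τ : V) (x : V) :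
    reflLM co τ x = x - co τ x • τ := rfl

theorem reflLM_invol (co : V → Module.Dual ℚ V) (τ : V) (h2 : co τ τ = 2) (x : V) :
    reflLM co τ (reflLM co τ x) = x := by
  simp only [reflLM_apply, map_sub, map_smul, h2, smul_sub, sub_smul, smul_smul,
    smul_eq_mul, mul_comm]
  rw [show (2 * co τ x) • τ = co τ x • τ + co τ x • τ by rw [two_mul, add_smul]]
  abel

/-- The reflection attached to `τ`, as a linear equivalence. -/
noncomputable def refl0 (co : V → Module.Dual ℚ V) (τ : V) (h2 : co τ τ = 2) : V ≃ₗ[ℚ] V :=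
  LinearEquiv.ofLinear (reflLM co τ) (reflLM co τ)
    (by ext x; exact reflLM_invol co τ h2 x) (by ext x; exact reflLM_invol co τ h2 x)

theorem refl0_apply (co : V → Module.Dual ℚ V) (τ : V) (h2 : co τ τ = 2) (x : V) :
    refl0 co τ h2 x = x - co τ x • τ := rfl

theorem refl0_mem (Φ : Set V) (co : V → Module.Dual ℚ V) (τ : V) (hτ : τ ∈ Φ)
    (h2 : co τ τ = 2) : refl0 co τ h2 ∈ weylGroup Φ co :=
  Subgroup.subset_closure ⟨τ, hτ, fun x => rfl⟩

theorem neg_mem_of_root (Φ : Set V) (co : V → Module.Dual ℚ V) (hRS : IsRootSystem Φ co)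
    {τ : V} (hτ : τ ∈ Φ) : -τ ∈ Φ := by
  have := hRS.refl_mem τ hτ τ hτ
  rwa [hRS.pair_self τ hτ, show τ - (2:ℚ) • τ = -τ by rw [two_smul]; abel] at this

theorem exists_form [FiniteDimensional ℚ V] (Φ : Set V) (co : V → Module.Dual ℚ V)
    (hfin : Φ.Finite) (hspan : Submodule.span ℚ Φ = ⊤)
    (hroot : ∀ w ∈ weylGroup Φ co, ∀ α ∈ Φ, w α ∈ Φ) :
    ∃ B : V →ₗ[ℚ] V →ₗ[ℚ] ℚ, (∀ x y, B x y = B y x) ∧ (∀ x, x ≠ 0 → 0 < B x x) ∧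
      (∀ σ, σ ∈ weylGroup Φ co → ∀ x y, B (σ x) (σ y) = B x y) := by
  classical
  -- W is finite
  have hWfin : Finite (weylGroup Φ co) := by
    haveI := hfin.to_subtype
    have hinj : Function.Injective
        (fun σ : weylGroup Φ co => (fun a : Φ => (⟨σ.1 a.1, hroot σ.1 σ.2 a.1 a.2⟩ : Φ))) := by
      intro σ τ h
      have : ∀ a : Φ, σ.1 a.1 = τ.1 a.1 := fun a => congrArg Subtype.val (congrFun h a)
      apply Subtype.ext
      apply LinearEquiv.toLinearMap_injective
      apply LinearMap.ext_on hspan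
      intro x hx
      exact this ⟨x, hx⟩
    exact Finite.of_injective _ hinj
  haveI := hWfin
  haveI : Fintype (weylGroup Φ co) := Fintype.ofFinite _
  -- a starting inner product
  obtain ⟨n, b⟩ := Module.Free.exists_basis (R := ℚ) (M := V)
  haveI : Fintype n := FiniteDimensional.fintypeBasisIndex b
  set B0 : V →ₗ[ℚ] V →ₗ[ℚ] ℚ := LinearMap.mk₂ ℚ (fun x y => ∑ i, b.repr x i * b.repr y i)
    (by intro x x' y; simp [map_add, add_mul, Finset.sum_add_distrib])
    (by intro c x y; simp [Finset.mul_sum, mul_assoc])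
    (by intro x y y'; simp [map_add, mul_add, Finset.sum_add_distrib])
    (by intro c x y; simp [Finset.mul_sum]; exact Finset.sum_congr rfl fun i _ => by ring) with hB0
  have hB0symm : ∀ x y, B0 x y = B0 y x := by
    intro x y; simp [hB0, LinearMap.mk₂_apply, mul_comm]
  have hB0pos : ∀ x, x ≠ 0 → 0 < B0 x x := by
    intro x hx
    have : B0 x x = ∑ i, (b.repr x i)^2 := by simp [hB0, LinearMap.mk₂_apply, sq]
    rw [this]
    have hne : ∃ i, b.repr x i ≠ 0 := by
      by_contra h
      push_neg at h
      exact hx (by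
        have : b.repr x = 0 := Finsupp.ext fun i => h i
        simpa using congrArg b.repr.symm this)
    obtain ⟨i, hi⟩ := hne
    exact Finset.sum_pos' (fun j _ => sq_nonneg _) ⟨i, Finset.mem_univ i, by positivity⟩
  -- average
  set B : V →ₗ[ℚ] V →ₗ[ℚ] ℚ := LinearMap.mk₂ ℚ
      (fun x y => ∑ w : weylGroup Φ co, B0 (w.1 x) (w.1 y))
    (by intro x x' y; simp [map_add, Finset.sum_add_distrib])
    (by intro c x y; simp [map_smul, Finset.mul_sum])
    (by intro x y y'; simp [map_add, Finset.sum_add_distrib])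
    (by intro c x y; simp [map_smul, Finset.mul_sum]) with hB
  refine ⟨B, ?_, ?_, ?_⟩
  · intro x y; simp only [hB, LinearMap.mk₂_apply]
    exact Finset.sum_congr rfl fun w _ => hB0symm _ _
  · intro x hx
    have h1 : (0:ℚ) < B0 ((1 : weylGroup Φ co).1 x) ((1 : weylGroup Φ co).1 x) := by
      simpa using hB0pos x hx
    simp only [hB, LinearMap.mk₂_apply]
    refine Finset.sum_pos' (fun w _ => ?_) ⟨1, Finset.mem_univ _, h1⟩
    rcases eq_or_ne (w.1 x) 0 with h | h
    · simp [h]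
    · exact (hB0pos _ h).le
  · intro σ hσ x y
    simp only [hB, LinearMap.mk₂_apply]
    refine Fintype.sum_equiv (Equiv.mulRight (⟨σ, hσ⟩ : weylGroup Φ co)) _ _ fun w => ?_
    simp [Subgroup.coe_mul]


theorem pair_formula (Φ : Set V) (co : V → Module.Dual ℚ V) (hRS : IsRootSystem Φ co)
    (B : V →ₗ[ℚ] V →ₗ[ℚ] ℚ) (hsymm : ∀ x y, B x y = B y x)
    (hinv : ∀ σ, σ ∈ weylGroup Φ co → ∀ x y, B (σ x) (σ y) = B x y)
    {τ : V} (hτ : τ ∈ Φ) (x : V) :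
    co τ x * B τ τ = 2 * B x τ := by
  have h2 := hRS.pair_self τ hτ
  have h := hinv _ (refl0_mem Φ co τ hτ h2) x τ
  rw [refl0_apply, refl0_apply, h2] at h
  rw [show τ - (2:ℚ) • τ = -τ by rw [two_smul]; abel] at h
  simp only [map_sub, map_neg, map_smul, LinearMap.sub_apply, LinearMap.neg_apply,
    LinearMap.smul_apply, smul_eq_mul] at h
  have hs := hsymm τ x
  nlinarith [h]


theorem cs_strict (B : V →ₗ[ℚ] V →ₗ[ℚ] ℚ) (hsymm : ∀ x y, B x y = B y x)
    (hpos : ∀ x, x ≠ 0 → 0 < B x x) {x y : V} (hy : y ≠ 0) (h : ∀ c : ℚ, x ≠ c • y) :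
    (B x y)^2 < B x x * B y y := by
  have hyy : 0 < B y y := hpos y hy
  set z : V := (B y y) • x - (B x y) • y with hz
  have hzne : z ≠ 0 := by
    intro h0
    apply h (B x y / B y y)
    have : (B y y) • x = (B x y) • y := by
      have := sub_eq_zero.mp h0; linear_combination (norm := module) this
    calc x = (B y y)⁻¹ • ((B y y) • x) := by rw [smul_smul, inv_mul_cancel₀ hyy.ne', one_smul]
    _ = (B y y)⁻¹ • ((B x y) • y) := by rw [this]
    _ = (B x y / B y y) • y := by rw [smul_smul, div_eq_inv_mul]
  have hzz : 0 < B z z := hpos z hzne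
  have hexp : B z z = B y y * (B x x * B y y - (B x y)^2) := by
    simp only [hz, map_sub, map_smul, LinearMap.sub_apply, LinearMap.smul_apply, smul_eq_mul]
    linear_combination (B y y * B x y) * hsymm x y
  nlinarith [hzz, hyy, hexp]

theorem root_sub_mem (Φ : Set V) (co : V → Module.Dual ℚ V) (hRS : IsRootSystem Φ co)
    (B : V →ₗ[ℚ] V →ₗ[ℚ] ℚ) (hsymm : ∀ x y, B x y = B y x)
    (hpos : ∀ x, x ≠ 0 → 0 < B x x)
    (hinv : ∀ σ, σ ∈ weylGroup Φ co → ∀ x y, B (σ x) (σ y) = B x y)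
    {δ τ : V} (hδ : δ ∈ Φ) (hτ : τ ∈ Φ) (hne : δ ≠ τ) (hB : 0 < B τ δ) :
    δ - τ ∈ Φ := by
  have hττ : 0 < B τ τ := hpos τ (hRS.ne_zero τ hτ)
  have hδδ : 0 < B δ δ := hpos δ (hRS.ne_zero δ hδ)
  have hp : co τ δ * B τ τ = 2 * B δ τ := pair_formula Φ co hRS B hsymm hinv hτ δ
  have hq : co δ τ * B δ δ = 2 * B τ δ := pair_formula Φ co hRS B hsymm hinv hδ τ
  have hBsym : B δ τ = B τ δ := hsymm δ τ
  have hppos : 0 < co τ δ := by nlinarith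
  have hqpos : 0 < co δ τ := by nlinarith
  have hnp : ∀ c : ℚ, δ ≠ c • τ := by
    intro c hc
    have hcpos : 0 < c := by
      rw [hc] at hB; simp only [map_smul, smul_eq_mul] at hB; nlinarith
    rcases hRS.reduced τ hτ c (hc ▸ hδ) with h1 | h1
    · exact hne (by rw [hc, h1, one_smul])
    · rw [h1] at hcpos; norm_num at hcpos
  have hcs : (B δ τ)^2 < B δ δ * B τ τ := cs_strict B hsymm hpos (hRS.ne_zero τ hτ) hnp
  have hprod : co τ δ * co δ τ < 4 := by nlinarith
  obtain ⟨pn, hpn⟩ := hRS.pair_int τ hτ δ hδ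
  obtain ⟨qn, hqn⟩ := hRS.pair_int δ hδ τ hτ
  have hpn1 : 1 ≤ pn := by
    have : (0:ℚ) < pn := hpn ▸ hppos
    exact_mod_cast this
  have hqn1 : 1 ≤ qn := by
    have : (0:ℚ) < qn := hqn ▸ hqpos
    exact_mod_cast this
  have h14 : pn = 1 ∨ qn = 1 := by
    by_contra hcon
    push_neg at hcon
    have h2p : 2 ≤ pn := by omega
    have h2q : 2 ≤ qn := by omega
    have : (4:ℚ) ≤ co τ δ * co δ τ := by
      rw [hpn, hqn]
      have : (4:ℤ) ≤ pn * qn := by nlinarith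
      exact_mod_cast this
    linarith
  rcases h14 with h1 | h1
  · have := hRS.refl_mem τ hτ δ hδ
    rwa [hpn, h1, Int.cast_one, one_smul] at this
  · have := hRS.refl_mem δ hδ τ hτ
    rw [hqn, h1, Int.cast_one, one_smul] at this
    have hneg := neg_mem_of_root Φ co hRS this
    rwa [neg_sub] at hneg


theorem dual_expand {Δ : Set V} (Δb : Basis ↥Δ ℚ V) (g : Module.Dual ℚ V) (x : V) :
    g x = (Δb.repr x).sum fun v q => q * g (Δb v) := by
  conv_lhs => rw [← Δb.linearCombination_repr x]
  rw [Finsupp.linearCombination_apply, map_finsuppSum]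
  simp [Finsupp.sum, smul_eq_mul]

theorem coords_sign (Φ : Set V) (co : V → Module.Dual ℚ V) {Δ : Set V}
    (hΔ : IsBase Φ co Δ) (Δb : Basis ↥Δ ℚ V) (hΔb : ∀ v : ↥Δ, Δb v = v.1)
    {γ : V} (hγ : γ ∈ Φ) :
    (∀ a, 0 ≤ Δb.repr γ a) ∨ (∀ a, Δb.repr γ a ≤ 0) := by
  classical
  obtain ⟨c, hsupp, hc⟩ := hΔ.decomp γ hγ
  have key : ∀ a, 0 ≤ Δb.repr (c.sum fun v n => (n : ℚ) • v) a := by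
    intro a
    rw [map_finsuppSum]
    rw [Finsupp.sum_apply]
    rw [Finsupp.sum]
    apply Finset.sum_nonneg
    intro v hv
    have hvΔ : v ∈ Δ := hsupp hv
    have : Δb.repr ((c v : ℚ) • v) a = (c v : ℚ) * (Δb.repr v) a := by
      rw [map_smul]; rfl
    rw [this]
    have hrv : Δb.repr v = Finsupp.single ⟨v, hvΔ⟩ 1 := by
      conv_lhs => rw [show v = Δb ⟨v, hvΔ⟩ from (hΔb ⟨v, hvΔ⟩).symm]
      rw [Δb.repr_self]
    rw [hrv]
    rcases eq_or_ne (⟨v, hvΔ⟩ : ↥Δ) a with h | h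
    · rw [h, Finsupp.single_eq_same]; positivity
    · rw [Finsupp.single_eq_of_ne' h]; simp
  rcases hc with h | h
  · left; intro a; rw [h]; exact key a
  · right; intro a
    rw [h, map_neg]
    simpa using key a

theorem simples_nonpos (Φ : Set V) (co : V → Module.Dual ℚ V) (hRS : IsRootSystem Φ co)
    {Δ : Set V} (hΔ : IsBase Φ co Δ) (Δb : Basis ↥Δ ℚ V) (hΔb : ∀ v : ↥Δ, Δb v = v.1)
    (B : V →ₗ[ℚ] V →ₗ[ℚ] ℚ) (hsymm : ∀ x y, B x y = B y x)
    (hpos : ∀ x, x ≠ 0 → 0 < B x x)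
    (hinv : ∀ σ, σ ∈ weylGroup Φ co → ∀ x y, B (σ x) (σ y) = B x y)
    {a b : ↥Δ} (hne : a ≠ b) : B a.1 b.1 ≤ 0 := by
  classical
  by_contra hcon
  push_neg at hcon
  have haΦ : (a : V) ∈ Φ := hΔ.subset a.2
  have hbΦ : (b : V) ∈ Φ := hΔ.subset b.2
  have hneV : (b : V) ≠ (a : V) := fun h => hne (Subtype.ext h).symm
  have hmem : (b : V) - (a : V) ∈ Φ :=
    root_sub_mem Φ co hRS B hsymm hpos hinv hbΦ haΦ hneV hcon
  have hrep : Δb.repr ((b : V) - (a : V)) = Finsupp.single b 1 - Finsupp.single a 1 := by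
    rw [map_sub]
    rw [show (b : V) = Δb b from (hΔb b).symm, show (a : V) = Δb a from (hΔb a).symm]
    rw [Δb.repr_self, Δb.repr_self]
  rcases coords_sign Φ co hΔ Δb hΔb hmem with h | h
  · have := h a
    rw [hrep] at this
    simp [Finsupp.single_eq_of_ne' (Ne.symm hne), Finsupp.single_eq_same] at this
    linarith
  · have := h b
    rw [hrep] at this
    simp [Finsupp.single_eq_of_ne' hne, Finsupp.single_eq_same] at this
    linarith

/-- The "Dynkin graph" on `Δ` given by non-orthogonality. -/
def graph (Δ : Set V) (B : V →ₗ[ℚ] V →ₗ[ℚ] ℚ) (hsymm : ∀ x y, B x y = B y x) :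
    SimpleGraph ↥Δ where
  Adj a b := a ≠ b ∧ B a.1 b.1 ≠ 0
  symm := by
    constructor
    intro a b ⟨h1, h2⟩
    exact ⟨h1.symm, by rw [hsymm]; exact h2⟩
  loopless := ⟨fun a h => h.1 rfl⟩


theorem supp_conn (Φ : Set V) (co : V → Module.Dual ℚ V) (hRS : IsRootSystem Φ co)
    {Δ : Set V} (hΔ : IsBase Φ co Δ) (Δb : Basis ↥Δ ℚ V) (hΔb : ∀ v : ↥Δ, Δb v = v.1)
    (B : V →ₗ[ℚ] V →ₗ[ℚ] ℚ) (hsymm : ∀ x y, B x y = B y x)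
    (hpos : ∀ x, x ≠ 0 → 0 < B x x)
    (hinv : ∀ σ, σ ∈ weylGroup Φ co → ∀ x y, B (σ x) (σ y) = B x y)
    {γ : V} (hγ : γ ∈ Φ) :
    ∀ a ∈ (Δb.repr γ).support, ∀ b ∈ (Δb.repr γ).support,
      (graph Δ B hsymm).Reachable a b := by
  classical
  suffices H : ∀ n : ℕ, ∀ γ, γ ∈ Φ → (∀ a, 0 ≤ Δb.repr γ a) →
      ((Δb.repr γ).sum fun _ q => q) ≤ (n : ℚ) →
      ∀ a ∈ (Δb.repr γ).support, ∀ b ∈ (Δb.repr γ).support,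
        (graph Δ B hsymm).Reachable a b by
    rcases coords_sign Φ co hΔ Δb hΔb hγ with h | h
    · exact H ⌈(Δb.repr γ).sum fun _ q => q⌉₊ γ hγ h (Nat.le_ceil _)
    · have hnγ : -γ ∈ Φ := neg_mem_of_root Φ co hRS hγ
      have hr : Δb.repr (-γ) = -(Δb.repr γ) := map_neg _ _
      have hnn : ∀ a, 0 ≤ Δb.repr (-γ) a := fun a => by
        rw [hr]; simpa using h a
      have hH := H ⌈(Δb.repr (-γ)).sum fun _ q => q⌉₊ (-γ) hnγ hnn (Nat.le_ceil _)
      intro a ha b hb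
      have hs : (Δb.repr (-γ)).support = (Δb.repr γ).support := by
        rw [hr, Finsupp.support_neg]
      exact hH a (by rw [hs]; exact ha) b (by rw [hs]; exact hb)
  intro n
  induction n using Nat.strong_induction_on with
  | _ n IH =>
  intro γ hγ hnn hsum a ha b hb
  by_cases htriv : ∀ x ∈ (Δb.repr γ).support, ∀ y ∈ (Δb.repr γ).support, x = y
  · rw [htriv a ha b hb]
  push_neg at htriv
  obtain ⟨x0, hx0, y0, hy0, hxy0⟩ := htriv
  have hγ0 : γ ≠ 0 := hRS.ne_zero γ hγ
  have hBγγ : 0 < B γ γ := hpos γ hγ0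
  have hexp : B γ γ = (Δb.repr γ).sum fun v q => q * B γ (Δb v) := dual_expand Δb (B γ) γ
  have hex : ∃ v ∈ (Δb.repr γ).support, 0 < (Δb.repr γ) v * B γ (Δb v) := by
    by_contra hcon
    push_neg at hcon
    have : B γ γ ≤ 0 := by
      rw [hexp, Finsupp.sum]
      exact Finset.sum_nonpos hcon
    linarith
  obtain ⟨v, hv, hprod⟩ := hex
  have hqv : 0 < Δb.repr γ v :=
    lt_of_le_of_ne (hnn v) (Ne.symm (Finsupp.mem_support_iff.mp hv))
  have hBγv : 0 < B γ (Δb v) := by nlinarith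
  have hvΦ : (Δb v : V) ∈ Φ := by rw [hΔb v]; exact hΔ.subset v.2
  have hvv : 0 < B (Δb v) (Δb v) := hpos _ (hRS.ne_zero _ hvΦ)
  set m := co (Δb v) γ with hm
  have hpf : co (Δb v) γ * B (Δb v) (Δb v) = 2 * B γ (Δb v) :=
    pair_formula Φ co hRS B hsymm hinv hvΦ γ
  have hmpos : 0 < m := by nlinarith
  obtain ⟨mz, hmz⟩ := hRS.pair_int (Δb v) hvΦ γ hγ
  have hmz1 : 1 ≤ mz := by
    have : (0:ℚ) < (mz:ℚ) := by rw [← hmz]; exact hmpos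
    exact_mod_cast this
  have hm1 : (1:ℚ) ≤ m := by rw [hm, hmz]; exact_mod_cast hmz1
  set γ' := γ - m • (Δb v) with hγ'def
  have hγ'Φ : γ' ∈ Φ := hRS.refl_mem (Δb v) hvΦ γ hγ
  have hrep' : Δb.repr γ' = Δb.repr γ - m • Finsupp.single v 1 := by
    rw [hγ'def, map_sub, map_smul, Δb.repr_self]
  have hw : ∃ w ∈ (Δb.repr γ).support, w ≠ v := by
    rcases eq_or_ne x0 v with h | h
    · exact ⟨y0, hy0, fun e => hxy0 (h ▸ e ▸ rfl)⟩
    · exact ⟨x0, hx0, h⟩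
  obtain ⟨w, hwsupp, hwv⟩ := hw
  have hq'w : Δb.repr γ' w = Δb.repr γ w := by
    rw [hrep']
    simp [Finsupp.single_eq_of_ne' (Ne.symm hwv)]
  have hq'wpos : 0 < Δb.repr γ' w := by
    rw [hq'w]
    exact lt_of_le_of_ne (hnn w) (Ne.symm (Finsupp.mem_support_iff.mp hwsupp))
  have hnn' : ∀ x, 0 ≤ Δb.repr γ' x := by
    rcases coords_sign Φ co hΔ Δb hΔb hγ'Φ with h | h
    · exact h
    · exfalso; have := h w; linarith
  have hsum' : ((Δb.repr γ').sum fun _ q => q) = ((Δb.repr γ).sum fun _ q => q) - m := by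
    rw [hrep', Finsupp.sum_sub_index (fun _ _ _ => rfl)]
    congr 1
    rw [Finsupp.smul_single]
    rw [Finsupp.sum_single_index rfl]
    simp
  have hn1 : 1 ≤ n := by
    by_contra hcontra
    push_neg at hcontra
    have hn0 : n = 0 := by omega
    have hle : Δb.repr γ v ≤ (Δb.repr γ).sum fun _ q => q := by
      rw [Finsupp.sum]
      exact Finset.single_le_sum (fun i _ => hnn i) hv
    rw [hn0] at hsum
    simp at hsum
    linarith
  have hsum'' : ((Δb.repr γ').sum fun _ q => q) ≤ ((n-1 : ℕ) : ℚ) := by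
    rw [hsum']
    rw [Nat.cast_sub hn1]
    push_cast
    linarith
  have IHconn := IH (n-1) (by omega) γ' hγ'Φ hnn' hsum''
  have hBγ'v : B γ' (Δb v) < 0 := by
    have hlin : B γ' (Δb v) = B γ (Δb v) - m * B (Δb v) (Δb v) := by
      rw [hγ'def]
      simp [map_sub, map_smul]
    nlinarith
  have hexp' : B γ' (Δb v) = (Δb.repr γ').sum fun u q => q * B (Δb u) (Δb v) := by
    rw [hsymm γ' (Δb v), dual_expand Δb (B (Δb v)) γ']
    exact Finsupp.sum_congr fun u _ => by rw [hsymm (Δb v) (Δb u)]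
  have hexu : ∃ u ∈ (Δb.repr γ').support, (Δb.repr γ') u * B (Δb u) (Δb v) < 0 := by
    by_contra hcon
    push_neg at hcon
    have : 0 ≤ B γ' (Δb v) := by
      rw [hexp', Finsupp.sum]
      exact Finset.sum_nonneg hcon
    linarith
  obtain ⟨u, husupp, huneg⟩ := hexu
  have hq'u : 0 ≤ Δb.repr γ' u := hnn' u
  have hBuvneg : B (Δb u) (Δb v) < 0 := by
    rcases lt_or_ge (B (Δb u) (Δb v)) 0 with h | h
    · exact h
    · exfalso; nlinarith
  have huv : u ≠ v := by
    intro h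
    rw [h] at hBuvneg
    linarith
  have hadj : (graph Δ B hsymm).Adj u v := by
    refine ⟨huv, ?_⟩
    rw [← hΔb u, ← hΔb v]
    exact ne_of_lt hBuvneg
  have hsupset : ∀ x ∈ (Δb.repr γ).support, x = v ∨ x ∈ (Δb.repr γ').support := by
    intro x hx
    rcases eq_or_ne x v with h | h
    · exact Or.inl h
    · refine Or.inr (Finsupp.mem_support_iff.mpr ?_)
      have : Δb.repr γ' x = Δb.repr γ x := by
        rw [hrep']
        simp [Finsupp.single_eq_of_ne' (Ne.symm h)]
      rw [this]
      exact Finsupp.mem_support_iff.mp hx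
  have hreach : ∀ x ∈ (Δb.repr γ).support, (graph Δ B hsymm).Reachable x u := by
    intro x hx
    rcases hsupset x hx with h | h
    · rw [h]
      exact (hadj.symm).reachable
    · exact IHconn x h u husupp
  exact (hreach a ha).trans (hreach b hb).symm


theorem orbit_conn (Φ : Set V) (co : V → Module.Dual ℚ V) (hRS : IsRootSystem Φ co)
    {Δ : Set V} (hΔ : IsBase Φ co Δ) (Δb : Basis ↥Δ ℚ V) (hΔb : ∀ v : ↥Δ, Δb v = v.1)
    (B : V →ₗ[ℚ] V →ₗ[ℚ] ℚ) (hsymm : ∀ x y, B x y = B y x)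
    (hpos : ∀ x, x ≠ 0 → 0 < B x x)
    (hinv : ∀ σ, σ ∈ weylGroup Φ co → ∀ x y, B (σ x) (σ y) = B x y) :
    ∀ σ, σ ∈ weylGroup Φ co → ∀ γ, γ ∈ Φ →
      ∀ a ∈ (Δb.repr (σ γ)).support, ∀ b ∈ (Δb.repr γ).support,
        (graph Δ B hsymm).Reachable a b := by
  classical
  have hSC : ∀ γ, γ ∈ Φ → ∀ a ∈ (Δb.repr γ).support, ∀ b ∈ (Δb.repr γ).support,
      (graph Δ B hsymm).Reachable a b :=
    fun γ hγ => supp_conn Φ co hRS hΔ Δb hΔb B hsymm hpos hinv hγ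
  intro σ hσ
  induction hσ using Subgroup.closure_induction with
  | mem σ hσgen =>
    obtain ⟨τ, hτ, hform⟩ := hσgen
    intro γ hγ a ha b hb
    by_cases hc : co τ γ = 0
    · have : σ γ = γ := by rw [hform γ, hc, zero_smul, sub_zero]
      rw [this] at ha
      exact hSC γ hγ a ha b hb
    · -- link between supp γ and supp τ
      have hττ : 0 < B τ τ := hpos τ (hRS.ne_zero τ hτ)
      have hpf : co τ γ * B τ τ = 2 * B γ τ := pair_formula Φ co hRS B hsymm hinv hτ γ
      have hBγτ : B γ τ ≠ 0 := by
        intro h0; rw [h0] at hpf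
        exact hc (by nlinarith)
      have hx : ∃ x ∈ (Δb.repr γ).support, B τ (Δb x) ≠ 0 := by
        by_contra hcon
        push_neg at hcon
        have : B τ γ = 0 := by
          rw [dual_expand Δb (B τ) γ, Finsupp.sum]
          exact Finset.sum_eq_zero fun x hx => by rw [hcon x hx, mul_zero]
        exact hBγτ (by rw [hsymm γ τ]; exact this)
      obtain ⟨x0, hx0, hBx0⟩ := hx
      have hy : ∃ y ∈ (Δb.repr τ).support, B (Δb x0) (Δb y) ≠ 0 := by
        by_contra hcon
        push_neg at hcon
        have : B (Δb x0) τ = 0 := by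
          rw [dual_expand Δb (B (Δb x0)) τ, Finsupp.sum]
          exact Finset.sum_eq_zero fun y hy => by rw [hcon y hy, mul_zero]
        exact hBx0 (by rw [hsymm τ (Δb x0)]; exact this)
      obtain ⟨y0, hy0, hBy0⟩ := hy
      have hlink : (graph Δ B hsymm).Reachable x0 y0 := by
        rcases eq_or_ne x0 y0 with h | h
        · rw [h]
        · exact SimpleGraph.Adj.reachable ⟨h, by rw [← hΔb x0, ← hΔb y0]; exact hBy0⟩
      -- supp (σ γ) ⊆ supp γ ∪ supp τ
      have hrep : Δb.repr (σ γ) = Δb.repr γ - co τ γ • Δb.repr τ := by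
        rw [hform γ, map_sub, map_smul]
      have hcases : a ∈ (Δb.repr γ).support ∨ a ∈ (Δb.repr τ).support := by
        by_contra hcon
        push_neg at hcon
        have h1 : Δb.repr γ a = 0 := Finsupp.notMem_support_iff.mp hcon.1
        have h2 : Δb.repr τ a = 0 := Finsupp.notMem_support_iff.mp hcon.2
        have : Δb.repr (σ γ) a = 0 := by
          rw [hrep]; simp [h1, h2]
        exact Finsupp.mem_support_iff.mp ha this
      rcases hcases with h | h
      · exact hSC γ hγ a h b hb
      · exact ((hSC τ hτ a h y0 hy0).trans hlink.symm).trans (hSC γ hγ x0 hx0 b hb)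
  | one =>
    intro γ hγ a ha b hb
    have : (1 : V ≃ₗ[ℚ] V) γ = γ := rfl
    rw [this] at ha
    exact hSC γ hγ a ha b hb
  | mul σ₁ σ₂ hσ₁ hσ₂ p1 p2 =>
    intro γ hγ a ha b hb
    have hσ₂γ : σ₂ γ ∈ Φ := hRS.weyl_root σ₂ hσ₂ γ hγ
    have hne : (Δb.repr (σ₂ γ)).support.Nonempty := by
      rw [Finsupp.support_nonempty_iff]
      intro h0
      exact hRS.ne_zero _ hσ₂γ (by
        have := congrArg Δb.repr.symm h0
        simpa using this)
    obtain ⟨c, hcmem⟩ := hne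
    have hmul : (σ₁ * σ₂) γ = σ₁ (σ₂ γ) := rfl
    rw [hmul] at ha
    exact (p1 (σ₂ γ) hσ₂γ a ha c hcmem).trans (p2 γ hγ c hcmem b hb)
  | inv σ hσ p =>
    intro γ hγ a ha b hb
    have hσinv : σ⁻¹ ∈ weylGroup Φ co := by
      exact Subgroup.inv_mem _ hσ
    have hγ' : (σ⁻¹ : V ≃ₗ[ℚ] V) γ ∈ Φ := hRS.weyl_root _ hσinv γ hγ
    have happ : σ ((σ⁻¹ : V ≃ₗ[ℚ] V) γ) = γ := by
      have : σ * σ⁻¹ = 1 := mul_inv_cancel σ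
      calc σ ((σ⁻¹ : V ≃ₗ[ℚ] V) γ) = (σ * σ⁻¹) γ := rfl
      _ = γ := by rw [this]; rfl
    exact (p _ hγ' b (by rw [happ]; exact hb) a ha).symm


theorem chain_lemma (Φ : Set V) (co : V → Module.Dual ℚ V) (hRS : IsRootSystem Φ co)
    {Δ : Set V} (hΔ : IsBase Φ co Δ) (Δb : Basis ↥Δ ℚ V) (hΔb : ∀ v : ↥Δ, Δb v = v.1)
    (B : V →ₗ[ℚ] V →ₗ[ℚ] ℚ) (hsymm : ∀ x y, B x y = B y x)
    (hpos : ∀ x, x ≠ 0 → 0 < B x x)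
    (hinv : ∀ σ, σ ∈ weylGroup Φ co → ∀ x y, B (σ x) (σ y) = B x y)
    (a₀ b : ↥Δ) :
    ∀ (u : ↥Δ) (p : (graph Δ B hsymm).Walk u b), p.support.Nodup →
    ∀ δ, δ ∈ Φ → (∀ x, 0 ≤ Δb.repr δ x) → 1 ≤ Δb.repr δ a₀ → 1 ≤ Δb.repr δ u →
    (∀ x ∈ p.support.tail, Δb.repr δ x = 0) →
    ∀ σ : V ≃ₗ[ℚ] V, σ ∈ weylGroup Φ co → δ = σ a₀.1 →
    ∃ δ', δ' ∈ Φ ∧ ∃ σ' : V ≃ₗ[ℚ] V, σ' ∈ weylGroup Φ co ∧ δ' = σ' a₀.1 ∧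
      (∀ x, 0 ≤ Δb.repr δ' x) ∧ 1 ≤ Δb.repr δ' a₀ ∧ 1 ≤ Δb.repr δ' b := by
  classical
  intro u p
  induction p with
  | nil =>
    intro _ δ hδ hnn ha hu _ σ hσ hσa
    exact ⟨δ, hδ, σ, hσ, hσa, hnn, ha, hu⟩
  | @cons u v w hadj q ih =>
    intro hnd δ hδ hnn ha hu htail σ hσ hσa
    rw [SimpleGraph.Walk.support_cons] at hnd
    obtain ⟨hunotin, hqnd⟩ := List.nodup_cons.mp hnd
    have htail' : ∀ x ∈ (SimpleGraph.Walk.cons hadj q).support.tail, Δb.repr δ x = 0 := htail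
    have htailq : ∀ x ∈ q.support, Δb.repr δ x = 0 := by
      intro x hx
      apply htail
      rw [SimpleGraph.Walk.support_cons]
      exact hx
    have hvq : v ∈ q.support := SimpleGraph.Walk.start_mem_support q
    have hδv0 : Δb.repr δ v = 0 := htailq v hvq
    have hvΦ : (v : V) ∈ Φ := hΔ.subset v.2
    have huv : u ≠ v := hadj.1
    have hBuv : B u.1 v.1 < 0 :=
      lt_of_le_of_ne (simples_nonpos Φ co hRS hΔ Δb hΔb B hsymm hpos hinv huv) hadj.2
    -- B δ v < 0
    have husupp : u ∈ (Δb.repr δ).support := Finsupp.mem_support_iff.mpr (by linarith)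
    have hexp : B v.1 δ = (Δb.repr δ).sum fun x q => q * B v.1 (Δb x) :=
      dual_expand Δb (B v.1) δ
    have hterm : ∀ x ∈ (Δb.repr δ).support, Δb.repr δ x * B v.1 (Δb x) ≤ 0 := by
      intro x hx
      have hxv : x ≠ v := by
        intro h
        rw [h] at hx
        exact Finsupp.mem_support_iff.mp hx hδv0
      have : B v.1 (Δb x) ≤ 0 := by
        rw [hΔb x, hsymm]
        exact simples_nonpos Φ co hRS hΔ Δb hΔb B hsymm hpos hinv hxv
      have := mul_nonpos_of_nonneg_of_nonpos (hnn x) this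
      exact this
    have hBδv : B v.1 δ < 0 := by
      rw [hexp, Finsupp.sum]
      rw [← Finset.add_sum_erase _ _ husupp]
      have h1 : Δb.repr δ u * B v.1 (Δb u) ≤ B u.1 v.1 := by
        rw [hΔb u, hsymm v.1 u.1]
        nlinarith
      have h2 : ∑ x ∈ (Δb.repr δ).support.erase u, Δb.repr δ x * B v.1 (Δb x) ≤ 0 :=
        Finset.sum_nonpos fun x hx => hterm x (Finset.mem_of_mem_erase hx)
      linarith
    -- the pairing
    have hvv : 0 < B v.1 v.1 := hpos _ (hRS.ne_zero _ hvΦ)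
    have hpf : co v.1 δ * B v.1 v.1 = 2 * B δ v.1 := pair_formula Φ co hRS B hsymm hinv hvΦ δ
    have hcneg : co v.1 δ < 0 := by
      have := hsymm δ v.1
      nlinarith
    obtain ⟨mz, hmz⟩ := hRS.pair_int v.1 hvΦ δ hδ
    have hmz1 : mz ≤ -1 := by
      have h0 : (mz : ℚ) < 0 := by rw [← hmz]; exact hcneg
      have : mz < 0 := by exact_mod_cast h0
      omega
    have hm1 : (1:ℚ) ≤ -(co v.1 δ) := by
      rw [hmz]
      have : (mz:ℚ) ≤ -1 := by exact_mod_cast hmz1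
      linarith
    set δ' := δ - (co v.1 δ) • v.1 with hδ'def
    have hδ'Φ : δ' ∈ Φ := hRS.refl_mem v.1 hvΦ δ hδ
    have hrep' : Δb.repr δ' = Δb.repr δ - (co v.1 δ) • Finsupp.single v 1 := by
      rw [hδ'def, map_sub, map_smul]
      congr 1
      rw [show (v : V) = Δb v from (hΔb v).symm]
      rw [Δb.repr_self]
    have hval : ∀ x, Δb.repr δ' x = Δb.repr δ x - (co v.1 δ) * (if v = x then 1 else 0) := by
      intro x
      rw [hrep']
      simp [Finsupp.single_apply]
    have hnn' : ∀ x, 0 ≤ Δb.repr δ' x := by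
      intro x
      rw [hval x]
      have := hnn x
      split_ifs <;> linarith
    have ha' : 1 ≤ Δb.repr δ' a₀ := by
      rw [hval a₀]
      split_ifs <;> linarith
    have hv' : 1 ≤ Δb.repr δ' v := by
      rw [hval v, if_pos rfl, hδv0]
      linarith
    have htail'' : ∀ x ∈ q.support.tail, Δb.repr δ' x = 0 := by
      intro x hx
      have hxq : x ∈ q.support := List.mem_of_mem_tail hx
      have hxv : v ≠ x := by
        intro h
        rw [← h] at hx
        have : q.support = v :: q.support.tail := q.support_eq_cons
        rw [this] at hqnd
        exact (List.nodup_cons.mp hqnd).1 hx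
      rw [hval x, if_neg hxv, mul_zero, sub_zero]
      exact htailq x hxq
    -- reflection element
    have h2v : co v.1 v.1 = 2 := hRS.pair_self v.1 hvΦ
    have hσ' : refl0 co v.1 h2v * σ ∈ weylGroup Φ co :=
      Subgroup.mul_mem _ (refl0_mem Φ co v.1 hvΦ h2v) hσ
    have hδ'σ : δ' = (refl0 co v.1 h2v * σ) a₀.1 := by
      have : (refl0 co v.1 h2v * σ) a₀.1 = refl0 co v.1 h2v (σ a₀.1) := rfl
      rw [this, ← hσa, refl0_apply]
    exact ih hqnd δ' hδ'Φ hnn' ha' hv' htail'' _ hσ' hδ'σ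


theorem exists_big_root (Φ : Set V) (co : V → Module.Dual ℚ V) (hRS : IsRootSystem Φ co)
    {Δ : Set V} (hΔ : IsBase Φ co Δ) (Δb : Basis ↥Δ ℚ V) (hΔb : ∀ v : ↥Δ, Δb v = v.1)
    (B : V →ₗ[ℚ] V →ₗ[ℚ] ℚ) (hsymm : ∀ x y, B x y = B y x)
    (hpos : ∀ x, x ≠ 0 → 0 < B x x)
    (hinv : ∀ σ, σ ∈ weylGroup Φ co → ∀ x y, B (σ x) (σ y) = B x y)
    {a b : ↥Δ} (hr : (graph Δ B hsymm).Reachable a b) :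
    ∃ δ, δ ∈ Φ ∧ ∃ σ' : V ≃ₗ[ℚ] V, σ' ∈ weylGroup Φ co ∧ δ = σ' a.1 ∧
      (∀ x, 0 ≤ Δb.repr δ x) ∧ 1 ≤ Δb.repr δ a ∧ 1 ≤ Δb.repr δ b := by
  classical
  obtain ⟨p⟩ := hr
  set p' := p.bypass with hp'
  have hnd : p'.support.Nodup := (SimpleGraph.Walk.bypass_isPath p).support_nodup
  have haΦ : (a : V) ∈ Φ := hΔ.subset a.2
  have hrepa : Δb.repr (a : V) = Finsupp.single a 1 := by
    conv_lhs => rw [show (a : V) = Δb a from (hΔb a).symm]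
    rw [Δb.repr_self]
  have hnn : ∀ x, 0 ≤ Δb.repr (a : V) x := by
    intro x
    rw [hrepa, Finsupp.single_apply]
    split_ifs <;> norm_num
  have ha1 : 1 ≤ Δb.repr (a : V) a := by rw [hrepa, Finsupp.single_eq_same]
  have htail : ∀ x ∈ p'.support.tail, Δb.repr (a : V) x = 0 := by
    intro x hx
    have hxa : a ≠ x := by
      intro h
      have hsupp : p'.support = a :: p'.support.tail := p'.support_eq_cons
      rw [hsupp] at hnd
      exact (List.nodup_cons.mp hnd).1 (h ▸ hx)
    rw [hrepa, Finsupp.single_eq_of_ne' hxa]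
  exact chain_lemma Φ co hRS hΔ Δb hΔb B hsymm hpos hinv a b a p' hnd
    (a : V) haΦ hnn ha1 ha1 htail 1 (Subgroup.one_mem _) rfl

theorem active_unique_mu (Φ : Set V) (co : V → Module.Dual ℚ V) (hRS : IsRootSystem Φ co)
    {Δ : Set V} (hΔ : IsBase Φ co Δ) (Δb : Basis ↥Δ ℚ V) (hΔb : ∀ v : ↥Δ, Δb v = v.1)
    (B : V →ₗ[ℚ] V →ₗ[ℚ] ℚ) (hsymm : ∀ x y, B x y = B y x)
    (hpos : ∀ x, x ≠ 0 → 0 < B x x)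
    (hinv : ∀ σ, σ ∈ weylGroup Φ co → ∀ x y, B (σ x) (σ y) = B x y)
    (μ : Module.Dual ℚ V) (hdom : ∀ x : ↥Δ, 0 ≤ μ x.1)
    (hqc : IsQuasiConstantCowt Φ co μ)
    {a b : ↥Δ} (hA : μ a.1 ≠ 0) (hB : μ b.1 ≠ 0)
    (hr : (graph Δ B hsymm).Reachable a b) : a = b := by
  classical
  by_contra hne
  obtain ⟨δ, hδΦ, σ, hσ, hσa, hnn, ha1, hb1⟩ :=
    exists_big_root Φ co hRS hΔ Δb hΔb B hsymm hpos hinv hr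
  have haΦ : (a : V) ∈ Φ := hΔ.subset a.2
  have hapos : 0 < μ a.1 := lt_of_le_of_ne (hdom a) (Ne.symm hA)
  have hbpos : 0 < μ b.1 := lt_of_le_of_ne (hdom b) (Ne.symm hB)
  -- μ δ ≥ μ a + μ b
  have hexp : μ δ = (Δb.repr δ).sum fun x q => q * μ (Δb x) := dual_expand Δb μ δ
  have hasupp : a ∈ (Δb.repr δ).support := Finsupp.mem_support_iff.mpr (by linarith)
  have hbsupp : b ∈ (Δb.repr δ).support := Finsupp.mem_support_iff.mpr (by linarith)
  have hge : μ a.1 + μ b.1 ≤ μ δ := by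
    rw [hexp, Finsupp.sum]
    have hsub : ({a, b} : Finset ↥Δ) ⊆ (Δb.repr δ).support := by
      intro x hx
      rcases Finset.mem_insert.mp hx with h | h
      · rw [h]; exact hasupp
      · rw [Finset.mem_singleton.mp h]; exact hbsupp
    have hpair : ∑ x ∈ ({a, b} : Finset ↥Δ), Δb.repr δ x * μ (Δb x)
        = Δb.repr δ a * μ (Δb a) + Δb.repr δ b * μ (Δb b) :=
      Finset.sum_pair hne
    have hmono : ∑ x ∈ ({a, b} : Finset ↥Δ), Δb.repr δ x * μ (Δb x)
        ≤ ∑ x ∈ (Δb.repr δ).support, Δb.repr δ x * μ (Δb x) := by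
      apply Finset.sum_le_sum_of_subset_of_nonneg hsub
      intro x _ _
      exact mul_nonneg (hnn x) (by rw [hΔb x]; exact hdom x)
    rw [hpair] at hmono
    have hta : μ a.1 ≤ Δb.repr δ a * μ (Δb a) := by
      rw [hΔb a]; nlinarith
    have htb : μ b.1 ≤ Δb.repr δ b * μ (Δb b) := by
      rw [hΔb b]; nlinarith
    linarith
  have hratio := hqc a.1 haΦ hA σ hσ
  rw [← hσa] at hratio
  have hgt : 1 < μ δ / μ a.1 := by
    rw [lt_div_iff₀ hapos]
    linarith
  simp only [Set.mem_insert_iff, Set.mem_singleton_iff] at hratio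
  rcases hratio with h | h | h <;> rw [h] at hgt <;> linarith

theorem active_unique_chi (Φ : Set V) (co : V → Module.Dual ℚ V) (hRS : IsRootSystem Φ co)
    {Δ : Set V} (hΔ : IsBase Φ co Δ) (Δb : Basis ↥Δ ℚ V) (hΔb : ∀ v : ↥Δ, Δb v = v.1)
    (B : V →ₗ[ℚ] V →ₗ[ℚ] ℚ) (hsymm : ∀ x y, B x y = B y x)
    (hpos : ∀ x, x ≠ 0 → 0 < B x x)
    (hinv : ∀ σ, σ ∈ weylGroup Φ co → ∀ x y, B (σ x) (σ y) = B x y)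
    (χ : V) (hdom : ∀ x : ↥Δ, 0 ≤ co x.1 χ)
    (hqc : IsQuasiConstant Φ co χ)
    {a b : ↥Δ} (hA : co a.1 χ ≠ 0) (hB : co b.1 χ ≠ 0)
    (hr : (graph Δ B hsymm).Reachable a b) : a = b := by
  classical
  by_contra hne
  obtain ⟨δ, hδΦ, σ, hσ, hσa, hnn, ha1, hb1⟩ :=
    exists_big_root Φ co hRS hΔ Δb hΔb B hsymm hpos hinv hr
  have haΦ : (a : V) ∈ Φ := hΔ.subset a.2
  have hbΦ : (b : V) ∈ Φ := hΔ.subset b.2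
  have haa : 0 < B a.1 a.1 := hpos _ (hRS.ne_zero _ haΦ)
  have hbb : 0 < B b.1 b.1 := hpos _ (hRS.ne_zero _ hbΦ)
  -- B χ x ≥ 0 for all simples, > 0 at a, b
  have hBx : ∀ x : ↥Δ, co x.1 χ * B x.1 x.1 = 2 * B χ x.1 := fun x =>
    pair_formula Φ co hRS B hsymm hinv (hΔ.subset x.2) χ
  have hBpos : ∀ x : ↥Δ, 0 ≤ B χ x.1 := by
    intro x
    have h1 := hBx x
    have h2 := hdom x
    have hxx : 0 < B x.1 x.1 := hpos _ (hRS.ne_zero _ (hΔ.subset x.2))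
    nlinarith
  have hBa : 0 < B χ a.1 := by
    have h1 := hBx a
    have h2 : 0 < co a.1 χ := lt_of_le_of_ne (hdom a) (Ne.symm hA)
    nlinarith
  have hBb : 0 < B χ b.1 := by
    have h1 := hBx b
    have h2 : 0 < co b.1 χ := lt_of_le_of_ne (hdom b) (Ne.symm hB)
    nlinarith
  -- B χ δ ≥ B χ a + B χ b
  have hexp : B χ δ = (Δb.repr δ).sum fun x q => q * B χ (Δb x) := dual_expand Δb (B χ) δ
  have hasupp : a ∈ (Δb.repr δ).support := Finsupp.mem_support_iff.mpr (by linarith)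
  have hbsupp : b ∈ (Δb.repr δ).support := Finsupp.mem_support_iff.mpr (by linarith)
  have hge : B χ a.1 + B χ b.1 ≤ B χ δ := by
    rw [hexp, Finsupp.sum]
    have hsub : ({a, b} : Finset ↥Δ) ⊆ (Δb.repr δ).support := by
      intro x hx
      rcases Finset.mem_insert.mp hx with h | h
      · rw [h]; exact hasupp
      · rw [Finset.mem_singleton.mp h]; exact hbsupp
    have hpair : ∑ x ∈ ({a, b} : Finset ↥Δ), Δb.repr δ x * B χ (Δb x)
        = Δb.repr δ a * B χ (Δb a) + Δb.repr δ b * B χ (Δb b) :=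
      Finset.sum_pair hne
    have hmono : ∑ x ∈ ({a, b} : Finset ↥Δ), Δb.repr δ x * B χ (Δb x)
        ≤ ∑ x ∈ (Δb.repr δ).support, Δb.repr δ x * B χ (Δb x) := by
      apply Finset.sum_le_sum_of_subset_of_nonneg hsub
      intro x _ _
      exact mul_nonneg (hnn x) (by rw [hΔb x]; exact hBpos x)
    rw [hpair] at hmono
    have hta : B χ a.1 ≤ Δb.repr δ a * B χ (Δb a) := by
      rw [hΔb a]; nlinarith
    have htb : B χ b.1 ≤ Δb.repr δ b * B χ (Δb b) := by
      rw [hΔb b]; nlinarith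
    linarith
  -- lengths match
  have hlen : B δ δ = B a.1 a.1 := by
    rw [hσa]; exact hinv σ hσ a.1 a.1
  have hδΔ : co δ χ * B a.1 a.1 = 2 * B χ δ := by
    rw [← hlen]; exact pair_formula Φ co hRS B hsymm hinv hδΦ χ
  have hcoa : 0 < co a.1 χ := lt_of_le_of_ne (hdom a) (Ne.symm hA)
  have hcoδ : co a.1 χ < co δ χ := by nlinarith [hBx a]
  -- contradiction with quasi-constancy
  have hratio := hqc a.1 haΦ hA σ hσ
  have hcoact : coact σ (co a.1) = co (σ a.1) := (hRS.weyl_coroot σ hσ a.1 haΦ).symm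
  rw [hcoact, ← hσa] at hratio
  have hgt : 1 < co δ χ / co a.1 χ := by
    rw [lt_div_iff₀ hcoa]
    linarith
  simp only [Set.mem_insert_iff, Set.mem_singleton_iff] at hratio
  rcases hratio with h | h | h <;> rw [h] at hgt <;> linarith


theorem core (Φ : Set V) (co : V → Module.Dual ℚ V) (hRS : IsRootSystem Φ co)
    {Δ : Set V} (hΔ : IsBase Φ co Δ) (Δb : Basis ↥Δ ℚ V) (hΔb : ∀ v : ↥Δ, Δb v = v.1)
    (B : V →ₗ[ℚ] V →ₗ[ℚ] ℚ) (hsymm : ∀ x y, B x y = B y x)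
    (hpos : ∀ x, x ≠ 0 → 0 < B x x)
    (hinv : ∀ σ, σ ∈ weylGroup Φ co → ∀ x y, B (σ x) (σ y) = B x y)
    (μ : Module.Dual ℚ V) (χ : V) (hFK : ∀ a : ↥Δ, co a.1 χ = μ a.1)
    (hdom : IsDominantCowt Δ μ) :
    IsQuasiConstantCowt Φ co μ ↔ IsQuasiConstant Φ co χ := by
  classical
  have hdom' : ∀ x : ↥Δ, 0 ≤ μ x.1 := fun x => hdom x.1 x.2
  have hdomχ : ∀ x : ↥Δ, 0 ≤ co x.1 χ := fun x => by rw [hFK x]; exact hdom' x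
  have hBx : ∀ x : ↥Δ, 2 * B χ x.1 = μ x.1 * B x.1 x.1 := by
    intro x
    have := pair_formula Φ co hRS B hsymm hinv (hΔ.subset x.2) χ
    rw [hFK x] at this
    linarith
  have hxx : ∀ x : ↥Δ, 0 < B x.1 x.1 := fun x =>
    hpos _ (hRS.ne_zero _ (hΔ.subset x.2))
  -- Vanishing lemma: μ γ = 0 ↔ co γ χ = 0 for roots γ
  have hvanishB : ∀ γ, γ ∈ Φ → (μ γ = 0 ↔ B χ γ = 0) := by
    intro γ hγ
    have hμe : μ γ = (Δb.repr γ).sum fun x q => q * μ (Δb x) := dual_expand Δb μ γ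
    have hχe : B χ γ = (Δb.repr γ).sum fun x q => q * B χ (Δb x) := dual_expand Δb (B χ) γ
    have hptwise : ∀ x : ↥Δ, ∀ q : ℚ, (q * μ (Δb x) = 0 ↔ q * B χ (Δb x) = 0) := by
      intro x q
      rw [hΔb x]
      constructor
      · intro h
        rcases mul_eq_zero.mp h with h | h
        · rw [h, zero_mul]
        · have h2 := hBx x
          rw [h] at h2
          have : B χ x.1 = 0 := by linarith
          rw [this, mul_zero]
      · intro h
        rcases mul_eq_zero.mp h with h | h
        · rw [h, zero_mul]
        · have h2 := hBx x
          rw [h] at h2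
          have hx2 := hxx x
          have : μ x.1 = 0 := by
            rcases mul_eq_zero.mp (by linarith : μ x.1 * B x.1 x.1 = 0) with h' | h'
            · exact h'
            · exact absurd h' (ne_of_gt hx2)
          rw [this, mul_zero]
    rcases coords_sign Φ co hΔ Δb hΔb hγ with hs | hs
    · have h1 : ∀ x ∈ (Δb.repr γ).support, 0 ≤ Δb.repr γ x * μ (Δb x) := fun x _ =>
        mul_nonneg (hs x) (by rw [hΔb x]; exact hdom' x)
      have h2 : ∀ x ∈ (Δb.repr γ).support, 0 ≤ Δb.repr γ x * B χ (Δb x) := by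
        intro x _
        refine mul_nonneg (hs x) ?_
        rw [hΔb x]
        have := hBx x
        have := hxx x
        have := hdom' x
        nlinarith
      rw [hμe, hχe, Finsupp.sum, Finsupp.sum,
        Finset.sum_eq_zero_iff_of_nonneg h1, Finset.sum_eq_zero_iff_of_nonneg h2]
      constructor
      · intro h x hx
        exact (hptwise x _).mp (h x hx)
      · intro h x hx
        exact (hptwise x _).mpr (h x hx)
    · have h1 : ∀ x ∈ (Δb.repr γ).support, Δb.repr γ x * μ (Δb x) ≤ 0 := fun x _ =>
        mul_nonpos_of_nonpos_of_nonneg (hs x) (by rw [hΔb x]; exact hdom' x)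
      have h2 : ∀ x ∈ (Δb.repr γ).support, Δb.repr γ x * B χ (Δb x) ≤ 0 := by
        intro x _
        refine mul_nonpos_of_nonpos_of_nonneg (hs x) ?_
        rw [hΔb x]
        have := hBx x
        have := hxx x
        have := hdom' x
        nlinarith
      rw [hμe, hχe, Finsupp.sum, Finsupp.sum,
        Finset.sum_eq_zero_iff_of_nonpos h1, Finset.sum_eq_zero_iff_of_nonpos h2]
      constructor
      · intro h x hx
        exact (hptwise x _).mp (h x hx)
      · intro h x hx
        exact (hptwise x _).mpr (h x hx)
  have hvanish : ∀ γ, γ ∈ Φ → (μ γ = 0 ↔ co γ χ = 0) := by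
    intro γ hγ
    rw [hvanishB γ hγ]
    have hpf := pair_formula Φ co hRS B hsymm hinv hγ χ
    have hγγ : 0 < B γ γ := hpos γ (hRS.ne_zero γ hγ)
    constructor
    · intro h
      rw [h] at hpf
      rcases mul_eq_zero.mp (by linarith : co γ χ * B γ γ = 0) with h' | h'
      · exact h'
      · exact absurd h' (ne_of_gt hγγ)
    · intro h
      rw [h] at hpf
      linarith
  -- Main ratio lemma given uniqueness of the active vertex
  have main : (∀ a b : ↥Δ, μ a.1 ≠ 0 → μ b.1 ≠ 0 →
        (graph Δ B hsymm).Reachable a b → a = b) →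
      ∀ γ, γ ∈ Φ → ∀ σ : V ≃ₗ[ℚ] V, σ ∈ weylGroup Φ co → μ γ ≠ 0 → μ (σ γ) ≠ 0 →
      co (σ γ) χ * μ γ = μ (σ γ) * co γ χ := by
    intro huniq
    have hpropo : ∀ γ, γ ∈ Φ → μ γ ≠ 0 → ∃ a : ↥Δ, a ∈ (Δb.repr γ).support ∧
        μ a.1 ≠ 0 ∧ co γ χ * B γ γ = μ γ * B a.1 a.1 := by
      intro γ hγ hμγ
      have hμe : μ γ = (Δb.repr γ).sum fun x q => q * μ (Δb x) := dual_expand Δb μ γ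
      have hex : ∃ a ∈ (Δb.repr γ).support, Δb.repr γ a * μ (Δb a) ≠ 0 := by
        by_contra hcon
        push_neg at hcon
        exact hμγ (by
          rw [hμe, Finsupp.sum]
          exact Finset.sum_eq_zero hcon)
      obtain ⟨a, hasupp, ha⟩ := hex
      have hμa : μ a.1 ≠ 0 := by
        intro h
        apply ha
        rw [hΔb a, h, mul_zero]
      refine ⟨a, hasupp, hμa, ?_⟩
      have huniq2 : ∀ x ∈ (Δb.repr γ).support, x ≠ a → Δb.repr γ x * μ (Δb x) = 0 := by
        intro x hx hxa
        rcases eq_or_ne (μ (Δb x)) 0 with h | h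
        · rw [h, mul_zero]
        · exfalso
          apply hxa
          apply huniq x a (by rw [← hΔb x]; exact h) hμa
          exact supp_conn Φ co hRS hΔ Δb hΔb B hsymm hpos hinv hγ x hx a hasupp
      have hμval : μ γ = Δb.repr γ a * μ (Δb a) := by
        rw [hμe, Finsupp.sum]
        exact Finset.sum_eq_single_of_mem a hasupp huniq2
      have hχval : B χ γ = Δb.repr γ a * B χ (Δb a) := by
        rw [dual_expand Δb (B χ) γ, Finsupp.sum]
        apply Finset.sum_eq_single_of_mem a hasupp
        intro x hx hxa
        have h0 := huniq2 x hx hxa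
        rcases mul_eq_zero.mp h0 with h | h
        · rw [h, zero_mul]
        · rw [hΔb x] at h ⊢
          have h2 := hBx x
          rw [h, zero_mul] at h2
          have : B χ x.1 = 0 := by linarith
          rw [this, mul_zero]
      have hpf := pair_formula Φ co hRS B hsymm hinv hγ χ
      -- co γ χ * B γ γ = 2 B χ γ = q_a * 2 B χ a = q_a μ a B a a = μ γ B a a
      have h2a := hBx a
      rw [hΔb a] at hχval
      rw [hΔb a] at hμval
      linear_combination hpf + 2 * hχval + (Δb.repr γ a) * h2a - (B a.1 a.1) * hμval
    intro γ hγ σ hσ hμγ hμσγ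
    have hσγΦ : σ γ ∈ Φ := hRS.weyl_root σ hσ γ hγ
    obtain ⟨a, hasupp, hμa, hEa⟩ := hpropo γ hγ hμγ
    obtain ⟨a', hasupp', hμa', hEa'⟩ := hpropo (σ γ) hσγΦ hμσγ
    have haa : a' = a :=
      huniq a' a hμa' hμa
        (orbit_conn Φ co hRS hΔ Δb hΔb B hsymm hpos hinv σ hσ γ hγ a' hasupp' a hasupp)
    rw [haa] at hEa'
    have hlen : B (σ γ) (σ γ) = B γ γ := hinv σ hσ γ γ
    rw [hlen] at hEa'
    have hγγ : 0 < B γ γ := hpos γ (hRS.ne_zero γ hγ)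
    have hkey : (co (σ γ) χ * μ γ - μ (σ γ) * co γ χ) * B γ γ = 0 := by
      linear_combination μ γ * hEa' - μ (σ γ) * hEa
    rcases mul_eq_zero.mp hkey with h | h
    · linarith [sub_eq_zero.mp h]
    · exact absurd h (ne_of_gt hγγ)
  -- set-membership helper
  have hset : ∀ r : ℚ, r ∈ ({-1, 0, 1} : Set ℚ) ↔ r = -1 ∨ r = 0 ∨ r = 1 := by
    intro r
    simp [Set.mem_insert_iff]
  constructor
  · -- μ quasi-constant → χ quasi-constant
    intro hqc
    have huniq : ∀ a b : ↥Δ, μ a.1 ≠ 0 → μ b.1 ≠ 0 →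
        (graph Δ B hsymm).Reachable a b → a = b := fun a b ha hb hr =>
      active_unique_mu Φ co hRS hΔ Δb hΔb B hsymm hpos hinv μ hdom' hqc ha hb hr
    intro α hα hco σ hσ
    have hμα : μ α ≠ 0 := fun h => hco ((hvanish α hα).mp h)
    have hσαΦ : σ α ∈ Φ := hRS.weyl_root σ hσ α hα
    have hcoact : coact σ (co α) = co (σ α) := (hRS.weyl_coroot σ hσ α hα).symm
    rw [hcoact]
    by_cases h0 : μ (σ α) = 0
    · have : co (σ α) χ = 0 := (hvanish (σ α) hσαΦ).mp h0
      rw [this, zero_div]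
      rw [hset]
      tauto
    · have hcross := main huniq α hα σ hσ hμα h0
      have hratio := hqc α hα hμα σ hσ
      have heq : co (σ α) χ / co α χ = μ (σ α) / μ α := by
        rw [div_eq_div_iff hco hμα]
        exact hcross
      rw [heq]
      exact hratio
  · -- χ quasi-constant → μ quasi-constant
    intro hqc
    have huniq : ∀ a b : ↥Δ, μ a.1 ≠ 0 → μ b.1 ≠ 0 →
        (graph Δ B hsymm).Reachable a b → a = b := by
      intro a b ha hb hr
      refine active_unique_chi Φ co hRS hΔ Δb hΔb B hsymm hpos hinv χ hdomχ hqc ?_ ?_ hr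
      · rw [hFK a]; exact ha
      · rw [hFK b]; exact hb
    intro α hα hμα σ hσ
    have hσαΦ : σ α ∈ Φ := hRS.weyl_root σ hσ α hα
    have hco : co α χ ≠ 0 := fun h => hμα ((hvanish α hα).mpr h)
    by_cases h0 : μ (σ α) = 0
    · rw [h0, zero_div]
      rw [hset]
      tauto
    · have hcross := main huniq α hα σ hσ hμα h0
      have hratio := hqc α hα hco σ hσ
      have hcoact : coact σ (co α) = co (σ α) := (hRS.weyl_coroot σ hσ α hα).symm
      rw [hcoact] at hratio
      have hcoσ : co (σ α) χ ≠ 0 := fun h => h0 ((hvanish (σ α) hσαΦ).mpr h)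
      have heq : μ (σ α) / μ α = co (σ α) χ / co α χ := by
        rw [div_eq_div_iff hμα hco]
        linarith [hcross]
      rw [heq]
      exact hratio

end QCAux

/-- Proposition 1.7 / 3.4(5) of the paper. Let `Φ` span `V` with base
`Δ`, and let `f : V∨ ≃ V` be the linear isomorphism sending each fundamental coweight to
the corresponding fundamental weight. Then a nonzero `Δ`-dominant `μ ∈ V∨` is
quasi-constant iff `f μ` is quasi-constant; consequently `f` induces a bijection between
`Δ`-dominant quasi-constant rays in `V∨` and those in `V`. -/
theorem statement10 {V : Type*} [AddCommGroup V] [Module ℚ V] [FiniteDimensional ℚ V]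
    (Φ : Set V) (co : V → Module.Dual ℚ V) (hRS : QC.IsRootSystem Φ co)
    (hspan : Submodule.span ℚ Φ = ⊤)
    (Δ : Set V) (hΔ : QC.IsBase Φ co Δ)
    (f : Module.Dual ℚ V ≃ₗ[ℚ] V)
    (hf : ∀ α ∈ Δ, ∀ fc : Module.Dual ℚ V, ∀ η : V,
        QC.IsFundCoweight Δ α fc → QC.IsFundWeight co Δ α η → f fc = η) :
    (∀ μ : Module.Dual ℚ V, μ ≠ 0 → QC.IsDominantCowt Δ μ →
      (QC.IsQuasiConstantCowt Φ co μ ↔ QC.IsQuasiConstant Φ co (f μ))) ∧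
    Set.BijOn (fun r : Set (Module.Dual ℚ V) => (fun ν => f ν) '' r)
      {r | ∃ μ : Module.Dual ℚ V, μ ≠ 0 ∧ QC.IsDominantCowt Δ μ ∧
          QC.IsQuasiConstantCowt Φ co μ ∧ r = {ν | ∃ c : ℚ, 0 ≤ c ∧ ν = c • μ}}
      {r | ∃ χ : V, χ ≠ 0 ∧ QC.IsDominant co Δ χ ∧
          QC.IsQuasiConstant Φ co χ ∧ r = {y | ∃ c : ℚ, 0 ≤ c ∧ y = c • χ}} := by
  classical
  -- the basis given by Δ
  have hsp : ⊤ ≤ Submodule.span ℚ (Set.range ((↑) : ↥Δ → V)) := by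
    rw [Subtype.range_coe, hΔ.span_eq, hspan]
  let Δb : Module.Basis ↥Δ ℚ V := Module.Basis.mk hΔ.indep hsp
  have hΔb : ∀ v : ↥Δ, Δb v = v.1 := fun v => Module.Basis.mk_apply _ _ v
  obtain ⟨B, hsymm, hpos, hinv⟩ := QCAux.exists_form Φ co hRS.finite hspan hRS.weyl_root
  haveI : Finite ↥Δ := (hRS.finite.subset hΔ.subset).to_subtype
  haveI : Fintype ↥Δ := Fintype.ofFinite _
  -- the map y ↦ (⟨y, b∨⟩)_{b ∈ Δ} is a linear isomorphism
  let T : V →ₗ[ℚ] (↥Δ → ℚ) := LinearMap.pi (fun b => co b.1)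
  have hTapp : ∀ (y : V) (b : ↥Δ), T y b = co b.1 y := fun y b => rfl
  have hTinj : Function.Injective T := by
    rw [← LinearMap.ker_eq_bot]
    rw [LinearMap.ker_eq_bot']
    intro y hy
    have hco0 : ∀ b : ↥Δ, co b.1 y = 0 := fun b => by
      have := congrFun hy b
      simpa [hTapp] using this
    have hBy : (B y : Module.Dual ℚ V) = 0 := by
      apply LinearMap.ext_on (show Submodule.span ℚ Δ = ⊤ from hΔ.span_eq.trans hspan)
      intro x hx
      have hxΦ : x ∈ Φ := hΔ.subset hx
      have hpf := QCAux.pair_formula Φ co hRS B hsymm hinv hxΦ y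
      have h0 : co x y = 0 := hco0 ⟨x, hx⟩
      simp only [LinearMap.zero_apply]
      rw [h0, zero_mul] at hpf
      linarith
    by_contra hy0
    have := hpos y hy0
    rw [hBy] at this
    simp at this
  have hTsurj : Function.Surjective T := by
    have h1 : Module.finrank ℚ V = Module.finrank ℚ (↥Δ → ℚ) := by
      rw [Module.finrank_eq_card_basis Δb, Module.finrank_pi]
    exact (LinearMap.injective_iff_surjective_of_finrank_eq_finrank h1).mp hTinj
  -- fundamental weights
  have hηex : ∀ a : ↥Δ, ∃ η : V, ∀ b : ↥Δ, co b.1 η = if b = a then 1 else 0 := by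
    intro a
    obtain ⟨η, hη⟩ := hTsurj (Pi.single a 1)
    refine ⟨η, fun b => ?_⟩
    have := congrFun hη b
    rw [hTapp] at this
    rw [this, Pi.single_apply]
  choose η hη using hηex
  -- fundamental coweights
  let ε : ↥Δ → Module.Dual ℚ V := fun a => Δb.coord a
  have hε : ∀ a b : ↥Δ, ε a (b : V) = if b = a then 1 else 0 := by
    intro a b
    show Δb.coord a (b : V) = _
    rw [show (b : V) = Δb b from (hΔb b).symm, Module.Basis.coord_apply, Δb.repr_self,
      Finsupp.single_apply]
  have hFCW : ∀ a : ↥Δ, QC.IsFundCoweight Δ a.1 (ε a) := by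
    intro a β hβ
    have := hε a ⟨β, hβ⟩
    rw [this]
    by_cases h : β = a.1
    · rw [if_pos h, if_pos (Subtype.ext h)]
    · rw [if_neg h, if_neg (fun h' => h (congrArg Subtype.val h'))]
  have hFW : ∀ a : ↥Δ, QC.IsFundWeight co Δ a.1 (η a) := by
    intro a β hβ
    have := hη a ⟨β, hβ⟩
    rw [this]
    by_cases h : β = a.1
    · rw [if_pos (Subtype.ext h), if_pos h]
    · rw [if_neg (fun h' => h (congrArg Subtype.val h')), if_neg h]
  have hfη : ∀ a : ↥Δ, f (ε a) = η a := fun a => hf a.1 a.2 (ε a) (η a) (hFCW a) (hFW a)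
  -- decomposition of duals in fundamental coweights
  have hrepr : ∀ μ : Module.Dual ℚ V, μ = ∑ a : ↥Δ, μ a.1 • ε a := by
    intro μ
    apply Module.Basis.ext Δb
    intro b
    rw [LinearMap.sum_apply]
    simp only [LinearMap.smul_apply, smul_eq_mul]
    rw [Finset.sum_eq_single b]
    · rw [hΔb b, hε b b, if_pos rfl, mul_one]
    · intro a _ hab
      rw [hΔb b, hε a b, if_neg (Ne.symm hab), mul_zero]
    · intro h
      exact absurd (Finset.mem_univ b) h
  have hFK : ∀ (μ : Module.Dual ℚ V) (b : ↥Δ), co b.1 (f μ) = μ b.1 := by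
    intro μ b
    conv_lhs => rw [hrepr μ, map_sum]
    simp only [map_smul, hfη]
    rw [map_sum]
    simp only [map_smul, smul_eq_mul, hη]
    rw [Finset.sum_eq_single b]
    · rw [if_pos rfl, mul_one]
    · intro a _ hab
      rw [if_neg (Ne.symm hab), mul_zero]
    · intro h
      exact absurd (Finset.mem_univ b) h
  -- the iff
  have hiff : ∀ μ : Module.Dual ℚ V, QC.IsDominantCowt Δ μ →
      (QC.IsQuasiConstantCowt Φ co μ ↔ QC.IsQuasiConstant Φ co (f μ)) := by
    intro μ hdom
    exact QCAux.core Φ co hRS hΔ Δb hΔb B hsymm hpos hinv μ (f μ) (fun a => hFK μ a) hdom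
  have hdomiff : ∀ μ : Module.Dual ℚ V,
      (QC.IsDominantCowt Δ μ ↔ QC.IsDominant co Δ (f μ)) := by
    intro μ
    constructor
    · intro h α hα
      rw [hFK μ ⟨α, hα⟩]
      exact h α hα
    · intro h α hα
      rw [← hFK μ ⟨α, hα⟩]
      exact h α hα
  refine ⟨fun μ _ hdom => hiff μ hdom, ?_, ?_, ?_⟩
  · -- MapsTo
    rintro r ⟨μ, hμ0, hdom, hqc, rfl⟩
    refine ⟨f μ, ?_, (hdomiff μ).mp hdom, (hiff μ hdom).mp hqc, ?_⟩
    · intro h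
      exact hμ0 (f.map_eq_zero_iff.mp h)
    · ext y
      constructor
      · rintro ⟨ν, ⟨c, hc, rfl⟩, rfl⟩
        exact ⟨c, hc, (map_smul f c μ)⟩
      · rintro ⟨c, hc, rfl⟩
        exact ⟨c • μ, ⟨c, hc, rfl⟩, map_smul f c μ⟩
  · -- InjOn
    intro r1 _ r2 _ h
    exact Set.image_injective.mpr f.injective h
  · -- SurjOn
    rintro r ⟨χ, hχ0, hdomχ, hqcχ, rfl⟩
    set μ := f.symm χ with hμ
    have hfμ : f μ = χ := f.apply_symm_apply χ
    have hμ0 : μ ≠ 0 := by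
      intro h
      apply hχ0
      rw [← hfμ, h, map_zero]
    have hdomμ : QC.IsDominantCowt Δ μ := by
      apply (hdomiff μ).mpr
      rw [hfμ]
      exact hdomχ
    have hqcμ : QC.IsQuasiConstantCowt Φ co μ := by
      apply (hiff μ hdomμ).mpr
      rw [hfμ]
      exact hqcχ
    refine ⟨{ν | ∃ c : ℚ, 0 ≤ c ∧ ν = c • μ}, ⟨μ, hμ0, hdomμ, hqcμ, rfl⟩, ?_⟩
    ext y
    constructor
    · rintro ⟨ν, ⟨c, hc, rfl⟩, rfl⟩
      exact ⟨c, hc, by show f (c • μ) = c • χ; rw [map_smul, hfμ]⟩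
    · rintro ⟨c, hc, rfl⟩
      exact ⟨c • μ, ⟨c, hc, rfl⟩, by show f (c • μ) = c • χ; rw [map_smul, hfμ]⟩
end

section
/- Let Φ be a reduced root system spanning V with irreducible components Φ₁, …, Φ_d (so V = V₁ ⊕ ⋯ ⊕ V_d), let Δ ⊆ Φ be a base with Δ_i = Δ ∩ Φ_i, and let μ ∈ V∨ be a nonzero Δ-dominant quasi-constant element. Then: (a) for each i such that the projection μ_i of μ to V_i∨ is nonzero, there is a unique simple root α_i ∈ Δ_i with ⟨α_i, μ⟩ ≠ 0 (equivalently, μ_i is a positive rational multiple of the fundamental coweight η(α_i∨)); (b) the element χ := Σ_{i : μ_i ≠ 0} η(α_i) ∈ V is quasi-constant; and (c) for every simple root α ∈ Δ, ⟨χ, α∨⟩ ≠ 0 if and only if ⟨α, μ⟩ ≠ 0. -/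
namespace QCP
open QC Submodule
variable {V : Type*} [AddCommGroup V] [Module ℚ V]
variable {Φ : Set V} {co : V → Module.Dual ℚ V} {Δ : Set V}

noncomputable def rmap (co : V → Module.Dual ℚ V) (α : V) : V →ₗ[ℚ] V :=
  LinearMap.id - (co α).smulRight α

@[simp] lemma rmap_apply (co : V → Module.Dual ℚ V) (α x : V) :
    rmap co α x = x - co α x • α := rfl

lemma rmap_invol {co : V → Module.Dual ℚ V} {α : V} (h2 : co α α = 2) (x : V) :
    rmap co α (rmap co α x) = x := by
  have h : co α (x - co α x • α) = - co α x := by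
    rw [map_sub, map_smul, h2]; simp; ring
  simp only [rmap_apply, h]
  module




noncomputable def requiv {co : V → Module.Dual ℚ V} {α : V} (h2 : co α α = 2) :
    V ≃ₗ[ℚ] V :=
  LinearEquiv.ofLinear (rmap co α) (rmap co α)
    (LinearMap.ext fun x => rmap_invol h2 x) (LinearMap.ext fun x => rmap_invol h2 x)

@[simp] lemma requiv_apply {co : V → Module.Dual ℚ V} {α : V} (h2 : co α α = 2) (x : V) :
    requiv h2 x = x - co α x • α := rfl

lemma requiv_mem {Φ : Set V} {co : V → Module.Dual ℚ V} {α : V} (h2 : co α α = 2)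
    (hα : α ∈ Φ) : requiv h2 ∈ weylGroup Φ co :=
  Subgroup.subset_closure ⟨α, hα, fun _ => rfl⟩

lemma weyl_finite {Φ : Set V} {co : V → Module.Dual ℚ V} (hfin : Φ.Finite)
    (hspan : span ℚ Φ = ⊤) (hroot : ∀ w ∈ weylGroup Φ co, ∀ α ∈ Φ, w α ∈ Φ) :
    Finite (weylGroup Φ co) := by
  haveI := hfin.fintype
  apply Finite.of_injective
    (fun w : weylGroup Φ co => (fun a : Φ => (⟨w.1 a.1, hroot w.1 w.2 a.1 a.2⟩ : Φ)))
  intro w w' h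
  apply Subtype.ext
  apply LinearEquiv.toLinearMap_injective
  apply LinearMap.ext_on hspan
  intro x hx
  have := congrFun h ⟨x, hx⟩
  simpa [Subtype.ext_iff] using this

lemma exists_form [FiniteDimensional ℚ V] {Φ : Set V} {co : V → Module.Dual ℚ V}
    (hfin : Φ.Finite) (hspan : span ℚ Φ = ⊤)
    (hroot : ∀ w ∈ weylGroup Φ co, ∀ α ∈ Φ, w α ∈ Φ) :
    ∃ B : V →ₗ[ℚ] V →ₗ[ℚ] ℚ, (∀ x y, B x y = B y x) ∧ (∀ x, x ≠ 0 → 0 < B x x) ∧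
      (∀ σ ∈ weylGroup Φ co, ∀ x y, B (σ x) (σ y) = B x y) := by
  haveI : Finite (weylGroup Φ co) := weyl_finite hfin hspan hroot
  haveI := Fintype.ofFinite (weylGroup Φ co)
  set b := Module.finBasis ℚ V with hbdef
  set B0 : V →ₗ[ℚ] V →ₗ[ℚ] ℚ := LinearMap.mk₂ ℚ (fun x y => ∑ i, b.repr x i * b.repr y i)
    (by intro m1 m2 n; simp [map_add, add_mul, Finset.sum_add_distrib])
    (by intro c m n; simp only [map_smul, Finsupp.smul_apply, smul_eq_mul, Finset.mul_sum]
        exact Finset.sum_congr rfl fun i _ => by ring)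
    (by intro m n1 n2; simp [map_add, mul_add, Finset.sum_add_distrib])
    (by intro c m n; simp only [map_smul, Finsupp.smul_apply, smul_eq_mul, Finset.mul_sum]
        exact Finset.sum_congr rfl fun i _ => by ring) with hB0def
  have hB0sym : ∀ x y, B0 x y = B0 y x := by
    intro x y; simp only [hB0def, LinearMap.mk₂_apply]
    exact Finset.sum_congr rfl fun i _ => mul_comm _ _
  have hB0nn : ∀ x, 0 ≤ B0 x x := by
    intro x; simp only [hB0def, LinearMap.mk₂_apply]
    exact Finset.sum_nonneg fun i _ => mul_self_nonneg _
  have hB0pos : ∀ x, x ≠ 0 → 0 < B0 x x := by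
    intro x hx
    have : ∃ i, b.repr x i ≠ 0 := by
      by_contra h; push_neg at h
      exact hx (b.repr.map_eq_zero_iff.mp (Finsupp.ext h))
    obtain ⟨i, hi⟩ := this
    simp only [hB0def, LinearMap.mk₂_apply]
    exact Finset.sum_pos' (fun j _ => mul_self_nonneg _)
      ⟨i, Finset.mem_univ i, mul_self_pos.mpr hi⟩
  refine ⟨LinearMap.mk₂ ℚ (fun x y => ∑ w : weylGroup Φ co, B0 (w.1 x) (w.1 y))
    (by intro m1 m2 n; simp [map_add, LinearMap.add_apply, Finset.sum_add_distrib])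
    (by intro c m n; simp only [map_smul, LinearMap.smul_apply, smul_eq_mul, Finset.mul_sum])
    (by intro m n1 n2; simp [map_add, Finset.sum_add_distrib])
    (by intro c m n; simp only [map_smul, smul_eq_mul, Finset.mul_sum]),
    ?_, ?_, ?_⟩
  · intro x y; simp only [LinearMap.mk₂_apply]
    exact Finset.sum_congr rfl fun w _ => hB0sym _ _
  · intro x hx; simp only [LinearMap.mk₂_apply]
    refine Finset.sum_pos' (fun w _ => hB0nn _) ⟨1, Finset.mem_univ _, ?_⟩
    simpa using hB0pos x hx
  · intro σ hσ x y; simp only [LinearMap.mk₂_apply]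
    have hmul : ∀ (w : weylGroup Φ co) (z : V), (↑(w * ⟨σ, hσ⟩) : V ≃ₗ[ℚ] V) z = w.1 (σ z) :=
      fun w z => rfl
    exact Fintype.sum_bijective (fun w : weylGroup Φ co => w * ⟨σ, hσ⟩)
      (Group.mulRight_bijective _) _ _ fun w => by rw [hmul, hmul]


lemma neg_mem_phi (hRS : IsRootSystem Φ co) {θ : V} (hθ : θ ∈ Φ) : -θ ∈ Φ := by
  have h := hRS.refl_mem θ hθ θ hθ
  rw [hRS.pair_self θ hθ] at h
  have e : θ - (2 : ℚ) • θ = -θ := by module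
  rwa [e] at h

lemma coB (hRS : IsRootSystem Φ co) {B : V →ₗ[ℚ] V →ₗ[ℚ] ℚ}
    (hinv : ∀ σ ∈ weylGroup Φ co, ∀ x y, B (σ x) (σ y) = B x y)
    {α : V} (hα : α ∈ Φ) (x : V) : co α x * B α α = 2 * B α x := by
  have h2 := hRS.pair_self α hα
  have h := hinv _ (requiv_mem h2 hα) α x
  have hα' : requiv h2 α = -α := by rw [requiv_apply, h2]; module
  rw [hα', requiv_apply] at h
  simp only [map_neg, map_sub, map_smul, LinearMap.neg_apply, LinearMap.sub_apply,
    LinearMap.smul_apply, smul_eq_mul] at h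
  linarith

lemma cs {B : V →ₗ[ℚ] V →ₗ[ℚ] ℚ} (hsym : ∀ x y, B x y = B y x)
    (hpos : ∀ x, x ≠ 0 → 0 < B x x) {x y : V}
    (hz : B x x • y - B x y • x ≠ 0) : (B x y) ^ 2 < B x x * B y y := by
  have hx : x ≠ 0 := by
    rintro rfl; simp at hz
  have h1 := hpos _ hz
  have h2 := hpos _ hx
  have e : B (B x x • y - B x y • x) (B x x • y - B x y • x)
      = B x x * (B x x * B y y - B x y ^ 2) := by
    simp only [map_sub, map_smul, LinearMap.sub_apply, LinearMap.smul_apply, smul_eq_mul]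
    rw [hsym y x]; ring
  nlinarith [h1, h2, e]

lemma sub_mem_phi (hRS : IsRootSystem Φ co) {B : V →ₗ[ℚ] V →ₗ[ℚ] ℚ}
    (hsym : ∀ x y, B x y = B y x) (hpos : ∀ x, x ≠ 0 → 0 < B x x)
    (hcoB : ∀ {α}, α ∈ Φ → ∀ x, co α x * B α α = 2 * B α x)
    {α δ : V} (hα : α ∈ Φ) (hδ : δ ∈ Φ) (hBpos : 0 < B α δ)
    (h1 : α ≠ δ) (h2 : α ≠ -δ) : α - δ ∈ Φ := by
  have hBα := hpos α (hRS.ne_zero α hα)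
  have hBδ := hpos δ (hRS.ne_zero δ hδ)
  have hp := hcoB hα δ
  have hq := hcoB hδ α
  rw [hsym δ α] at hq
  have hppos : 0 < co α δ := by nlinarith
  have hqpos : 0 < co δ α := by nlinarith
  -- non-proportionality
  have hz : B α α • δ - B α δ • α ≠ 0 := by
    intro hzz
    have hδeq : δ = ((B α δ) / (B α α)) • α := by
      have heq : B α α • δ = B α δ • α := sub_eq_zero.mp hzz
      rw [div_eq_mul_inv, mul_comm, mul_smul, ← heq, smul_smul,
        inv_mul_cancel₀ (ne_of_gt hBα), one_smul]
    rcases hRS.reduced α hα _ (hδeq ▸ hδ) with hc | hc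
    · rw [hc, one_smul] at hδeq; exact h1 hδeq.symm
    · rw [hc] at hδeq
      apply h2; rw [hδeq]; module
  have hcs := cs hsym hpos hz
  obtain ⟨np, hnp⟩ := hRS.pair_int α hα δ hδ
  obtain ⟨nq, hnq⟩ := hRS.pair_int δ hδ α hα
  have hnp1 : 1 ≤ np := by
    have : (0:ℚ) < np := by rw [← hnp]; exact hppos
    exact_mod_cast this
  have hnq1 : 1 ≤ nq := by
    have : (0:ℚ) < nq := by rw [← hnq]; exact hqpos
    exact_mod_cast this
  have hprod : (np : ℚ) * nq < 4 := by
    rw [← hnp, ← hnq]; nlinarith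
  have hcase : np = 1 ∨ nq = 1 := by
    by_contra hcon; push_neg at hcon
    have h1' : 2 ≤ np := by omega
    have h2' : 2 ≤ nq := by omega
    have : (4:ℚ) ≤ (np:ℚ) * nq := by
      have : (4:ℤ) ≤ np * nq := by nlinarith
      exact_mod_cast this
    linarith
  rcases hcase with hc | hc
  · -- co α δ = 1 : δ - α ∈ Φ, then negate
    have := hRS.refl_mem α hα δ hδ
    rw [hnp, hc] at this
    simp only [Int.cast_one, one_smul] at this
    have hneg := neg_mem_phi hRS this
    rwa [neg_sub] at hneg
  · have := hRS.refl_mem δ hδ α hα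
    rw [hnq, hc] at this
    simpa using this


lemma repr_S [Fintype ↥Δ] (b : Module.Basis ↥Δ ℚ V) (hb : ∀ j : ↥Δ, b j = ↑j)
    (c : V →₀ ℕ) (hc : ↑c.support ⊆ Δ) (j : ↥Δ) :
    b.repr (c.sum fun v k => (k : ℚ) • v) j = (c ↑j : ℚ) := by
  classical
  rw [Finsupp.sum, map_sum, Finsupp.finset_sum_apply]
  have : ∀ v ∈ c.support, b.repr ((c v : ℚ) • v) j = if v = ↑j then (c v : ℚ) else 0 := by
    intro v hv
    have hvΔ : v ∈ Δ := hc hv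
    have hbv : v = b ⟨v, hvΔ⟩ := (hb ⟨v, hvΔ⟩).symm
    rw [map_smul, Finsupp.smul_apply, smul_eq_mul]
    have h0 : b.repr (b ⟨v, hvΔ⟩) j = if (⟨v, hvΔ⟩ : ↥Δ) = j then 1 else 0 :=
      Module.Basis.repr_self_apply b ⟨v, hvΔ⟩ j
    rw [hb ⟨v, hvΔ⟩] at h0
    have hrv : b.repr v j = if v = (↑j : V) then 1 else 0 := by
      rw [h0]
      by_cases h : v = (↑j : V)
      · rw [if_pos (Subtype.ext h), if_pos h]
      · rw [if_neg (fun hh => h (congrArg Subtype.val hh)), if_neg h]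
    rw [hrv]
    by_cases h : v = (↑j : V)
    · rw [if_pos h, if_pos h, mul_one]
    · rw [if_neg h, if_neg h, mul_zero]
  rw [Finset.sum_congr rfl this, Finset.sum_ite_eq' c.support (↑j : V) (fun v => (c v : ℚ))]
  by_cases h : (↑j : V) ∈ c.support
  · rw [if_pos h]
  · rw [if_neg h, Finsupp.notMem_support_iff.mp h, Nat.cast_zero]

lemma signs [Fintype ↥Δ] (hΔ : IsBase Φ co Δ) (b : Module.Basis ↥Δ ℚ V)
    (hb : ∀ j : ↥Δ, b j = ↑j) :
    ∀ α ∈ Φ, (∀ j, 0 ≤ b.repr α j) ∨ (∀ j, b.repr α j ≤ 0) := by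
  intro α hα
  obtain ⟨c, hcs, hc | hc⟩ := hΔ.decomp α hα
  · left; intro j; rw [hc, repr_S b hb c hcs]; positivity
  · right; intro j; rw [hc, map_neg, Finsupp.neg_apply, repr_S b hb c hcs]
    simp only [neg_nonpos]; positivity

lemma hgt_eq [Fintype ↥Δ] (c : V →₀ ℕ) (hc : ↑c.support ⊆ Δ) :
    ∑ j : ↥Δ, (c ↑j : ℚ) = ((c.sum fun _ k => k : ℕ) : ℚ) := by
  classical
  rw [Finsupp.sum, Nat.cast_sum]
  rw [← Finset.sum_subtype (Set.toFinset Δ) (fun x => Set.mem_toFinset) (fun v => (c v : ℚ))]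
  refine (Finset.sum_subset ?_ ?_).symm
  · intro v hv; rw [Set.mem_toFinset]; exact hc hv
  · intro v _ hv; rw [Finsupp.notMem_support_iff.mp hv, Nat.cast_zero]


lemma expand_B [Fintype ↥Δ] (b : Module.Basis ↥Δ ℚ V) (hb : ∀ j : ↥Δ, b j = ↑j)
    (B : V →ₗ[ℚ] V →ₗ[ℚ] ℚ) (x y : V) :
    B x y = ∑ j : ↥Δ, b.repr y j * B x ↑j := by
  have hy : B x y = B x (∑ j : ↥Δ, b.repr y j • b j) := by rw [Module.Basis.sum_repr]
  rw [hy, map_sum]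
  exact Finset.sum_congr rfl fun j _ => by rw [map_smul, smul_eq_mul, hb j]

lemma dich_aux (hRS : IsRootSystem Φ co) (hΔ : IsBase Φ co Δ)
    [Fintype ↥Δ] (b : Module.Basis ↥Δ ℚ V) (hb : ∀ j : ↥Δ, b j = ↑j)
    {B : V →ₗ[ℚ] V →ₗ[ℚ] ℚ} (hsym : ∀ x y, B x y = B y x)
    (hpos : ∀ x, x ≠ 0 → 0 < B x x)
    (hcoB : ∀ {α}, α ∈ Φ → ∀ x, co α x * B α α = 2 * B α x)
    {A : Set V} (hAΔ : A ⊆ Δ) (horthA : ∀ δ ∈ A, ∀ δ' ∈ Δ, δ' ∉ A → B δ δ' = 0) :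
    ∀ n : ℕ, ∀ α ∈ Φ, ∀ c : V →₀ ℕ, ↑c.support ⊆ Δ →
      α = c.sum (fun v k => (k : ℚ) • v) → (c.sum fun _ k => k) = n →
      (∀ j : ↥Δ, (↑j : V) ∉ A → b.repr α j = 0) ∨
      (∀ j : ↥Δ, (↑j : V) ∈ A → b.repr α j = 0) := by
  classical
  have hsigns := signs hΔ b hb
  intro n
  induction n using Nat.strong_induction_on with
  | _ n ih =>
  intro α hα c hcs hceq hcn
  have hrepr : ∀ j : ↥Δ, b.repr α j = (c ↑j : ℚ) := fun j => by
    rw [hceq]; exact repr_S b hb c hcs j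
  have hnn : ∀ j, 0 ≤ b.repr α j := fun j => by rw [hrepr]; positivity
  by_cases hsing : ∀ j₁ j₂ : ↥Δ, b.repr α j₁ ≠ 0 → b.repr α j₂ ≠ 0 → j₁ = j₂
  · have hα0 : α ≠ 0 := hRS.ne_zero α hα
    have hex : ∃ j0, b.repr α j0 ≠ 0 := by
      by_contra h; push_neg at h
      exact hα0 (b.repr.map_eq_zero_iff.mp (Finsupp.ext h))
    obtain ⟨j0, hj0⟩ := hex
    by_cases hj0A : (↑j0 : V) ∈ A
    · left; intro j hj
      by_contra hne
      have := hsing j j0 hne hj0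
      rw [this] at hj; exact hj hj0A
    · right; intro j hj
      by_contra hne
      have := hsing j j0 hne hj0
      rw [this] at hj; exact hj0A hj
  · push_neg at hsing
    obtain ⟨j₁, j₂, h1, h2, hne12⟩ := hsing
    have hBαα : 0 < B α α := hpos α (hRS.ne_zero α hα)
    have hexp : B α α = ∑ j : ↥Δ, b.repr α j * B α ↑j := expand_B b hb B α α
    have hjstar : ∃ js : ↥Δ, b.repr α js ≠ 0 ∧ 0 < B α ↑js := by
      by_contra h; push_neg at h
      have hle : B α α ≤ 0 := by
        rw [hexp]
        apply Finset.sum_nonpos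
        intro j _
        by_cases hj : b.repr α j = 0
        · simp [hj]
        · have := h j hj; nlinarith [hnn j]
      linarith
    obtain ⟨js, hjs0, hjsB⟩ := hjstar
    have hδΔ : (↑js : V) ∈ Δ := js.2
    have hδΦ : (↑js : V) ∈ Φ := hΔ.subset hδΔ
    have hreprδ : ∀ j : ↥Δ, b.repr (↑js : V) j = if js = j then 1 else 0 := by
      intro j
      have h0 := Module.Basis.repr_self_apply b js j
      rwa [hb js] at h0
    have hother : ∃ jo, b.repr α jo ≠ 0 ∧ jo ≠ js := by
      rcases eq_or_ne j₁ js with e | e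
      · exact ⟨j₂, h2, by rw [← e]; exact hne12.symm⟩
      · exact ⟨j₁, h1, e⟩
    obtain ⟨jo, hjo0, hjone⟩ := hother
    have hne1 : α ≠ (↑js : V) := by
      intro h
      have hzc : ∀ j, j ≠ js → b.repr α j = 0 := by
        intro j hj
        rw [h, hreprδ j, if_neg (fun hh => hj hh.symm)]
      exact hjo0 (hzc jo hjone)
    have hne2 : α ≠ -(↑js : V) := by
      intro h
      have := hnn js
      rw [h, map_neg, Finsupp.neg_apply, hreprδ js, if_pos rfl] at this
      linarith
    have hsub : α - ↑js ∈ Φ := sub_mem_phi hRS hsym hpos hcoB hα hδΦ hjsB hne1 hne2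
    have hreprsub : ∀ j : ↥Δ, b.repr (α - ↑js) j = b.repr α j - (if js = j then 1 else 0) := by
      intro j; rw [map_sub, Finsupp.sub_apply, hreprδ j]
    obtain ⟨c', hcs', hc'⟩ := hΔ.decomp _ hsub
    have hsub0 : α - ↑js ≠ 0 := hRS.ne_zero _ hsub
    have hposcase : α - ↑js = c'.sum (fun v k => (k : ℚ) • v) := by
      rcases hc' with hc' | hc'
      · exact hc'
      · exfalso
        have hneg : ∀ j, b.repr (α - ↑js) j ≤ 0 := by
          intro j; rw [hc', map_neg, Finsupp.neg_apply, repr_S b hb c' hcs']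
          simp only [neg_nonpos]; positivity
        have hjov := hneg jo
        rw [hreprsub jo, if_neg (fun hh => hjone hh.symm)] at hjov
        simp only [sub_zero] at hjov
        exact hjo0 (le_antisymm hjov (hnn jo))
    have hreprsub' : ∀ j : ↥Δ, b.repr (α - ↑js) j = (c' ↑j : ℚ) := fun j => by
      rw [hposcase]; exact repr_S b hb c' hcs' j
    -- height decreases
    have hgt : (c'.sum fun _ k => k) < n := by
      have e1 : ((c.sum fun _ k => k : ℕ) : ℚ) = ∑ j : ↥Δ, b.repr α j := by
        rw [← hgt_eq c hcs]
        exact Finset.sum_congr rfl fun j _ => (hrepr j).symm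
      have e2 : ((c'.sum fun _ k => k : ℕ) : ℚ) = ∑ j : ↥Δ, b.repr (α - ↑js) j := by
        rw [← hgt_eq c' hcs']
        exact Finset.sum_congr rfl fun j _ => (hreprsub' j).symm
      have e3 : ∑ j : ↥Δ, b.repr (α - ↑js) j = (∑ j : ↥Δ, b.repr α j) - 1 := by
        rw [Finset.sum_congr rfl fun j (_ : j ∈ Finset.univ) => hreprsub j,
          Finset.sum_sub_distrib]
        congr 1
        rw [Finset.sum_ite_eq Finset.univ js (fun _ => (1:ℚ)), if_pos (Finset.mem_univ js)]
      have e4 : ((c'.sum fun _ k => k : ℕ) : ℚ) = ((n : ℕ) : ℚ) - 1 := by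
        rw [e2, e3, ← e1, hcn]
      have : (c'.sum fun _ k => k) + 1 = n := by
        have : ((c'.sum fun _ k => k : ℕ) : ℚ) + 1 = ((n : ℕ) : ℚ) := by rw [e4]; ring
        exact_mod_cast this
      omega
    have IH := ih _ hgt (α - ↑js) hsub c' hcs' hposcase rfl
    -- the common contradiction
    have mixed : b.repr (α - ↑js) js = 0 →
        (∀ j : ↥Δ, b.repr (α - ↑js) j ≠ 0 → B ↑js ↑j = 0) → False := by
      intro hz horth
      have hc1 : b.repr α js = 1 := by
        have := hreprsub js; rw [hz, if_pos rfl] at this; linarith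
      have hBδsub : B ↑js (α - ↑js) = 0 := by
        rw [expand_B b hb B (↑js) (α - ↑js)]
        apply Finset.sum_eq_zero
        intro j _
        by_cases h : b.repr (α - ↑js) j = 0
        · rw [h, zero_mul]
        · rw [horth j h, mul_zero]
      have hBδα : B ↑js α = B ↑js ↑js := by
        have hh : B ↑js (α - ↑js) = B ↑js α - B ↑js ↑js := by rw [map_sub]
        rw [hBδsub] at hh; linarith
      have hBδδ : 0 < B ↑js ↑js := hpos _ (hRS.ne_zero _ hδΦ)
      have hco2 : co ↑js α = 2 := by
        have := hcoB hδΦ α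
        rw [hBδα] at this
        have h4 := mul_right_cancel₀ (ne_of_gt hBδδ) this
        exact h4
      have hθ : α - (2:ℚ) • (↑js : V) ∈ Φ := by
        have := hRS.refl_mem _ hδΦ α hα
        rwa [hco2] at this
      have hreprθ : ∀ j : ↥Δ, b.repr (α - (2:ℚ) • ↑js) j
          = b.repr α j - 2 * (if js = j then 1 else 0) := by
        intro j
        rw [map_sub, Finsupp.sub_apply, map_smul, Finsupp.smul_apply, hreprδ j, smul_eq_mul]
      rcases hsigns _ hθ with hs | hs
      · have := hs js
        rw [hreprθ js, if_pos rfl, hc1] at this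
        linarith
      · have := hs jo
        rw [hreprθ jo, if_neg (fun hh => hjone hh.symm)] at this
        have h5 := hnn jo
        have : b.repr α jo ≤ 0 := by linarith
        exact hjo0 (le_antisymm this h5)
    rcases IH with hIA | hIB
    · by_cases hjsA : (↑js : V) ∈ A
      · left; intro j hjA
        have hj' := hIA j hjA
        rw [hreprsub j, if_neg (fun hh : js = j => hjA (hh ▸ hjsA))] at hj'
        linarith
      · exfalso
        apply mixed (hIA js hjsA)
        intro j hj
        have hjA : (↑j : V) ∈ A := by by_contra hjA; exact hj (hIA j hjA)
        rw [hsym]; exact horthA ↑j hjA ↑js hδΔ hjsA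
    · by_cases hjsA : (↑js : V) ∈ A
      · exfalso
        apply mixed (hIB js hjsA)
        intro j hj
        have hjA : (↑j : V) ∉ A := by intro hjA; exact hj (hIB j hjA)
        exact horthA ↑js hjsA ↑j j.2 hjA
      · right; intro j hjA
        have hj' := hIB j hjA
        rw [hreprsub j, if_neg (fun hh : js = j => hjsA (hh ▸ hjA))] at hj'
        linarith

lemma dich (hRS : IsRootSystem Φ co) (hΔ : IsBase Φ co Δ)
    [Fintype ↥Δ] (b : Module.Basis ↥Δ ℚ V) (hb : ∀ j : ↥Δ, b j = ↑j)
    {B : V →ₗ[ℚ] V →ₗ[ℚ] ℚ} (hsym : ∀ x y, B x y = B y x)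
    (hpos : ∀ x, x ≠ 0 → 0 < B x x)
    (hcoB : ∀ {α}, α ∈ Φ → ∀ x, co α x * B α α = 2 * B α x)
    {A : Set V} (hAΔ : A ⊆ Δ) (horthA : ∀ δ ∈ A, ∀ δ' ∈ Δ, δ' ∉ A → B δ δ' = 0) :
    ∀ α ∈ Φ, (∀ j : ↥Δ, (↑j : V) ∉ A → b.repr α j = 0) ∨
      (∀ j : ↥Δ, (↑j : V) ∈ A → b.repr α j = 0) := by
  intro α hα
  obtain ⟨c, hcs, hc | hc⟩ := hΔ.decomp α hα
  · exact dich_aux hRS hΔ b hb hsym hpos hcoB hAΔ horthA _ α hα c hcs hc rfl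
  · have hneg : -α ∈ Φ := neg_mem_phi hRS hα
    have h := dich_aux hRS hΔ b hb hsym hpos hcoB hAΔ horthA _ (-α) hneg c hcs
      (by rw [hc, neg_neg]) rfl
    rcases h with h | h
    · left; intro j hj
      have := h j hj; rw [map_neg, Finsupp.neg_apply] at this; linarith
    · right; intro j hj
      have := h j hj; rw [map_neg, Finsupp.neg_apply] at this; linarith


lemma obtuse (hRS : IsRootSystem Φ co) (hΔ : IsBase Φ co Δ)
    [Fintype ↥Δ] (b : Module.Basis ↥Δ ℚ V) (hb : ∀ j : ↥Δ, b j = ↑j)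
    {B : V →ₗ[ℚ] V →ₗ[ℚ] ℚ} (hsym : ∀ x y, B x y = B y x)
    (hpos : ∀ x, x ≠ 0 → 0 < B x x)
    (hcoB : ∀ {α}, α ∈ Φ → ∀ x, co α x * B α α = 2 * B α x) :
    ∀ x ∈ Δ, ∀ y ∈ Δ, x ≠ y → co x y ≤ 0 := by
  classical
  intro x hx y hy hxy
  by_contra hpos'
  push_neg at hpos'
  have hxΦ := hΔ.subset hx
  have hyΦ := hΔ.subset hy
  have hBxx := hpos x (hRS.ne_zero x hxΦ)
  have hBxy : 0 < B x y := by have := hcoB hxΦ y; nlinarith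
  have hyne : y ≠ -x := by
    intro h
    rw [h, map_neg] at hpos'
    have h2 := hRS.pair_self x hxΦ
    linarith
  have hsub : y - x ∈ Φ := by
    refine sub_mem_phi hRS hsym hpos hcoB hyΦ hxΦ ?_ (Ne.symm hxy) hyne
    rw [hsym]; exact hBxy
  have hreprx : ∀ j : ↥Δ, b.repr x j = if (⟨x, hx⟩ : ↥Δ) = j then 1 else 0 := by
    intro j; have h0 := Module.Basis.repr_self_apply b ⟨x, hx⟩ j; rwa [hb ⟨x, hx⟩] at h0
  have hrepry : ∀ j : ↥Δ, b.repr y j = if (⟨y, hy⟩ : ↥Δ) = j then 1 else 0 := by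
    intro j; have h0 := Module.Basis.repr_self_apply b ⟨y, hy⟩ j; rwa [hb ⟨y, hy⟩] at h0
  rcases signs hΔ b hb _ hsub with hs | hs
  · have := hs ⟨x, hx⟩
    rw [map_sub, Finsupp.sub_apply, hreprx, hrepry, if_pos rfl,
      if_neg (fun hh : (⟨y, hy⟩ : ↥Δ) = ⟨x, hx⟩ => hxy (congrArg Subtype.val hh).symm)] at this
    linarith
  · have := hs ⟨y, hy⟩
    rw [map_sub, Finsupp.sub_apply, hreprx, hrepry, if_pos rfl,
      if_neg (fun hh : (⟨x, hx⟩ : ↥Δ) = ⟨y, hy⟩ => hxy (congrArg Subtype.val hh))] at this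
    linarith

lemma chain (hRS : IsRootSystem Φ co)
    {B : V →ₗ[ℚ] V →ₗ[ℚ] ℚ} (hsym : ∀ x y, B x y = B y x)
    (hpos : ∀ x, x ≠ 0 → 0 < B x x)
    (hcoB : ∀ {α}, α ∈ Φ → ∀ x, co α x * B α α = 2 * B α x)
    (hΔΦ : Δ ⊆ Φ)
    (hobt : ∀ x ∈ Δ, ∀ y ∈ Δ, x ≠ y → co x y ≤ 0)
    {G : SimpleGraph V} (hG : ∀ {x y}, G.Adj x y → x ≠ y ∧ x ∈ Δ ∧ y ∈ Δ ∧ B x y ≠ 0)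
    {β : V} (hβ : β ∈ Δ) :
    ∀ {x g : V} (p : G.Walk x g), p.IsPath →
      ∀ (w : V ≃ₗ[ℚ] V), w ∈ weylGroup Φ co → ∀ (S : Finset V) (m : V → ℚ),
      w β = β + ∑ s ∈ S, m s • s → (∀ s ∈ S, 0 < m s) → ↑S ⊆ Δ →
      (x = β ∨ x ∈ S) → (∀ z ∈ p.support.tail, z ∉ S ∧ z ≠ β) →
      ∃ w' ∈ weylGroup Φ co, ∃ S' : Finset V, ∃ m' : V → ℚ,
        w' β = β + ∑ s ∈ S', m' s • s ∧ (∀ s ∈ S', 0 < m' s) ∧ ↑S' ⊆ Δ ∧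
        (g = β ∨ g ∈ S') := by
  classical
  intro x g p
  induction p with
  | nil =>
    intro _ w hw S m hweq hm hSΔ hx _
    exact ⟨w, hw, S, m, hweq, hm, hSΔ, hx⟩
  | @cons u v g' hadj p ih =>
    intro hp w hw S m hweq hm hSΔ hx hd
    obtain ⟨huv, huΔ, hvΔ, hBuv⟩ := hG hadj
    have hvsupp : v ∈ (SimpleGraph.Walk.cons hadj p).support.tail := by
      rw [SimpleGraph.Walk.support_cons]
      exact p.start_mem_support
    obtain ⟨hvS, hvβ⟩ := hd v hvsupp
    have hvΦ : v ∈ Φ := hΔΦ hvΔ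
    have hBvv := hpos v (hRS.ne_zero v hvΦ)
    set θ : V := β + ∑ s ∈ S, m s • s with hθdef
    have hcov : co v θ = co v β + ∑ s ∈ S, m s * co v s := by
      rw [map_add, map_sum]
      congr 1
      exact Finset.sum_congr rfl fun s _ => by rw [map_smul, smul_eq_mul]
    have hcovβ : co v β ≤ 0 := hobt v hvΔ β hβ hvβ
    have hterm : ∀ s ∈ S, m s * co v s ≤ 0 := by
      intro s hs
      have : co v s ≤ 0 := hobt v hvΔ s (hSΔ hs) (fun hh => hvS (hh ▸ hs))
      nlinarith [hm s hs]
    have hk : co v θ < 0 := by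
      rcases hx with hxβ | hxS
      · -- x = u = β
        have hcovβ' : co v β ≠ 0 := by
          intro h0
          have := hcoB hvΦ β
          rw [h0] at this
          have hBvβ : B v β = 0 := by linarith
          rw [hsym] at hBvβ
          rw [hxβ] at hBuv
          exact hBuv hBvβ
        have hsum := Finset.sum_nonpos hterm
        rw [hcov]
        have : co v β < 0 := lt_of_le_of_ne hcovβ hcovβ'
        linarith
      · -- u ∈ S
        have hcovu : co v u < 0 := by
          have hle : co v u ≤ 0 := hobt v hvΔ u huΔ (fun hh => hvS (hh ▸ hxS))
          have hne : co v u ≠ 0 := by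
            intro h0
            have := hcoB hvΦ u
            rw [h0] at this
            have : B v u = 0 := by linarith
            rw [hsym] at this
            exact hBuv this
          exact lt_of_le_of_ne hle hne
        have hsplit : ∑ s ∈ S, m s * co v s
            = ∑ s ∈ S.erase u, m s * co v s + m u * co v u :=
          (Finset.sum_erase_add S _ hxS).symm
        have hrest : ∑ s ∈ S.erase u, m s * co v s ≤ 0 :=
          Finset.sum_nonpos fun s hs => hterm s (Finset.mem_of_mem_erase hs)
        have hu : m u * co v u < 0 := mul_neg_of_pos_of_neg (hm u hxS) hcovu
        rw [hcov, hsplit]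
        linarith
    -- new data
    have h2 := hRS.pair_self v hvΦ
    set w' : V ≃ₗ[ℚ] V := (requiv h2) * w with hw'def
    have hw'mem : w' ∈ weylGroup Φ co :=
      Subgroup.mul_mem _ (requiv_mem h2 hvΦ) hw
    set k := co v θ with hkdef
    set S' : Finset V := insert v S with hS'def
    set m' : V → ℚ := fun s => if s = v then -k else m s with hm'def
    have hw'eq : w' β = β + ∑ s ∈ S', m' s • s := by
      have happ : w' β = requiv h2 (w β) := rfl
      rw [happ, hweq, requiv_apply]
      rw [hS'def, Finset.sum_insert hvS]
      have hmv : m' v = -k := by rw [hm'def]; simp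
      have hrest : ∑ s ∈ S, m' s • s = ∑ s ∈ S, m s • s := by
        refine Finset.sum_congr rfl fun s hs => ?_
        have hms : m' s = m s := by
          rw [hm'def]
          exact if_neg (fun hh : s = v => hvS (hh ▸ hs))
        rw [hms]
      rw [hmv, hrest, ← hkdef, hθdef]
      module
    have hm' : ∀ s ∈ S', 0 < m' s := by
      intro s hs
      rcases Finset.mem_insert.mp hs with rfl | hs'
      · have hms : m' s = -k := by rw [hm'def]; exact if_pos rfl
        rw [hms]; linarith
      · have hms : m' s = m s := by rw [hm'def]; exact if_neg (fun hh : s = v => hvS (hh ▸ hs'))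
        rw [hms]; exact hm s hs'
    have hS'Δ : ↑S' ⊆ Δ := by
      rw [hS'def]
      intro z hz
      rcases Finset.mem_insert.mp hz with rfl | hz'
      · exact hvΔ
      · exact hSΔ hz'
    have hd' : ∀ z ∈ p.support.tail, z ∉ S' ∧ z ≠ β := by
      intro z hz
      have hzsupp : z ∈ p.support := List.mem_of_mem_tail hz
      have hzfull : z ∈ (SimpleGraph.Walk.cons hadj p).support.tail := by
        rw [SimpleGraph.Walk.support_cons]; exact hzsupp
      obtain ⟨hzS, hzβ⟩ := hd z hzfull
      have hnodup : p.support.Nodup := hp.of_cons.support_nodup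
      have hzv : z ≠ v := by
        intro hh
        rw [p.support_eq_cons] at hnodup
        exact (List.nodup_cons.mp hnodup).1 (hh ▸ hz)
      refine ⟨?_, hzβ⟩
      rw [hS'def]
      intro hmem
      rcases Finset.mem_insert.mp hmem with hh | hh
      · exact hzv hh
      · exact hzS hh
    exact ih hp.of_cons w' hw'mem S' m' hw'eq hm' hS'Δ (Or.inr (Finset.mem_insert_self v S)) hd'


end QCP



open Classical in
/-- Construction 3.2 and Proposition 3.4(1)–(4) of the paper. Let
`Φ` span `V` with irreducible components `Φ₁, …, Φ_d` and base `Δ`, and let `μ ∈ V∨` be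
nonzero, `Δ`-dominant and quasi-constant. Then (a) for each `i` with nonzero projection
`μᵢ = μ ∘ π i` there is a unique simple root `αᵢ ∈ Δ ∩ Φᵢ` with `⟨αᵢ, μ⟩ ≠ 0`; and
(b), (c): the element `χ = Σ η(αᵢ)` (characterized by `⟨χ, β∨⟩ = 1` if `⟨β, μ⟩ ≠ 0` and
`⟨χ, β∨⟩ = 0` otherwise, for `β ∈ Δ`) is quasi-constant, and for every `α ∈ Δ` one has
`⟨χ, α∨⟩ ≠ 0` iff `⟨α, μ⟩ ≠ 0`. -/
theorem statement11 {V : Type*} [AddCommGroup V] [Module ℚ V] [FiniteDimensional ℚ V]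
    (Φ : Set V) (co : V → Module.Dual ℚ V) (hRS : QC.IsRootSystem Φ co)
    (hspan : Submodule.span ℚ Φ = ⊤)
    (d : ℕ) (Φc : Fin d → Set V)
    (hunion : Φ = ⋃ i, Φc i)
    (hdisj : ∀ i j, i ≠ j → Disjoint (Φc i) (Φc j))
    (hne : ∀ i, (Φc i).Nonempty)
    (hirr : ∀ i, QC.IsIrreducible (Φc i) co)
    (horth : ∀ i j, i ≠ j → ∀ α ∈ Φc i, ∀ β ∈ Φc j, co α β = 0)
    (π : Fin d → (V →ₗ[ℚ] V))
    (hπsum : ∀ x : V, ∑ i, π i x = x)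
    (hπroot : ∀ i, ∀ α ∈ Φc i, π i α = α)
    (hπroot' : ∀ i j, i ≠ j → ∀ α ∈ Φc i, π j α = 0)
    (hπco : ∀ i, ∀ α ∈ Φc i, ∀ x : V, co α (π i x) = co α x)
    (Δ : Set V) (hΔ : QC.IsBase Φ co Δ)
    (μ : Module.Dual ℚ V) (hμ : μ ≠ 0)
    (hdom : QC.IsDominantCowt Δ μ) (hqc : QC.IsQuasiConstantCowt Φ co μ) :
    (∀ i, μ.comp (π i) ≠ 0 → ∃! α, α ∈ Δ ∩ Φc i ∧ μ α ≠ 0) ∧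
    (∀ χ : V, (∀ β ∈ Δ, co β χ = if μ β ≠ 0 then 1 else 0) →
      QC.IsQuasiConstant Φ co χ ∧ (∀ α ∈ Δ, co α χ ≠ 0 ↔ μ α ≠ 0)) := by

  classical
  haveI : Fintype ↥Δ := (hRS.finite.subset hΔ.subset).fintype
  have hsp : ⊤ ≤ Submodule.span ℚ (Set.range ((↑) : Δ → V)) := by
    rw [Subtype.range_coe, hΔ.span_eq, hspan]
  let b : Module.Basis ↥Δ ℚ V := Module.Basis.mk hΔ.indep hsp
  have hb : ∀ j : ↥Δ, b j = ↑j := fun j => Module.Basis.mk_apply _ _ j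
  obtain ⟨B, hsym, hposB, hinv⟩ := QCP.exists_form hRS.finite hspan hRS.weyl_root
  have hcoB : ∀ {α : V}, α ∈ Φ → ∀ x, co α x * B α α = 2 * B α x :=
    fun {α} hα x => QCP.coB hRS hinv hα x
  have hobt := QCP.obtuse hRS hΔ b hb hsym hposB hcoB
  have hmemΦ : ∀ {i} {α : V}, α ∈ Φc i → α ∈ Φ := fun {i} {α} h => by
    rw [hunion]; exact Set.mem_iUnion.mpr ⟨i, h⟩
  have hπfix : ∀ i, ∀ x ∈ Submodule.span ℚ (Φc i), π i x = x := by
    intro i x hx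
    induction hx using Submodule.span_induction with
    | mem a ha => exact hπroot i a ha
    | zero => simp
    | add a a' _ _ h1 h2 => rw [map_add, h1, h2]
    | smul r a _ h1 => rw [map_smul, h1]
  have hπspan : ∀ i (x : V), π i x ∈ Submodule.span ℚ (Φc i) := by
    intro i x
    have hx : x ∈ Submodule.span ℚ Φ := by rw [hspan]; trivial
    induction hx using Submodule.span_induction with
    | mem a ha =>
      obtain ⟨j, hj⟩ := Set.mem_iUnion.mp (hunion ▸ ha)
      rcases eq_or_ne j i with rfl | hne'
      · rw [hπroot j a hj]; exact Submodule.subset_span hj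
      · rw [hπroot' j i hne' a hj]; exact Submodule.zero_mem _
    | zero => rw [map_zero]; exact Submodule.zero_mem _
    | add a a' _ _ h1 h2 => rw [map_add]; exact Submodule.add_mem _ h1 h2
    | smul r a _ h1 => rw [map_smul]; exact Submodule.smul_mem _ _ h1
  have hrootcomp : ∀ {i} {θ : V}, θ ∈ Φ → θ ∈ Submodule.span ℚ (Φc i) → θ ∈ Φc i := by
    intro i θ hθ hsp'
    obtain ⟨j, hj⟩ := Set.mem_iUnion.mp (hunion ▸ hθ)
    rcases eq_or_ne j i with rfl | hne'
    · exact hj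
    · exfalso
      have h1 : π i θ = θ := hπfix i θ hsp'
      have h2 : π i θ = 0 := hπroot' j i hne' θ hj
      rw [h1] at h2
      exact hRS.ne_zero θ hθ h2
  have hWcomp : ∀ i, ∀ σ : V ≃ₗ[ℚ] V, σ ∈ QC.weylGroup Φ co → ∀ α ∈ Φc i, σ α ∈ Φc i := by
    intro i
    set K : Subgroup (V ≃ₗ[ℚ] V) :=
      { carrier := {σ | ∀ α ∈ Φc i, σ α ∈ Φc i ∧ σ.symm α ∈ Φc i}
        one_mem' := fun α hα => ⟨hα, hα⟩
        mul_mem' := by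
          intro a a' ha ha' α hα
          exact ⟨(ha _ ((ha' α hα).1)).1, (ha' _ ((ha α hα).2)).2⟩
        inv_mem' := by
          intro a ha α hα
          exact ⟨(ha α hα).2, (ha α hα).1⟩ } with hKdef
    have hle : QC.weylGroup Φ co ≤ K := by
      rw [QC.weylGroup, Subgroup.closure_le]
      rintro σ ⟨δ, hδ, hσ⟩
      obtain ⟨j, hj⟩ := Set.mem_iUnion.mp (hunion ▸ hδ)
      have hinvol : ∀ x, σ (σ x) = x := by
        intro x
        rw [hσ, hσ]
        have hco : co δ (x - co δ x • δ) = - co δ x := by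
          rw [map_sub, map_smul, hRS.pair_self δ hδ]; simp; ring
        rw [hco]
        module
      have hsymmeq : ∀ x, σ.symm x = σ x := by
        intro x
        conv_lhs => rw [← hinvol x]
        rw [σ.symm_apply_apply]
      intro α hα
      have hmain : σ α ∈ Φc i := by
        rcases eq_or_ne j i with rfl | hne'
        · have h1 : σ α ∈ Φ := by rw [hσ]; exact hRS.refl_mem δ hδ α (hmemΦ hα)
          have h2 : σ α ∈ Submodule.span ℚ (Φc j) := by
            rw [hσ]
            exact Submodule.sub_mem _ (Submodule.subset_span hα)
              (Submodule.smul_mem _ _ (Submodule.subset_span hj))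
          exact hrootcomp h1 h2
        · have hco0 : co δ α = 0 := horth j i hne' δ hj α hα
          rw [hσ, hco0, zero_smul, sub_zero]; exact hα
      exact ⟨hmain, by rw [hsymmeq]; exact hmain⟩
    intro σ hσ α hα
    exact ((hle hσ) α hα).1
  have hspanΔi : ∀ i, ∀ α ∈ Φc i, α ∈ Submodule.span ℚ (Δ ∩ Φc i) := by
    intro i α hα
    have hΔspan : ∀ x ∈ Submodule.span ℚ Δ, π i x ∈ Submodule.span ℚ (Δ ∩ Φc i) := by
      intro x hx
      induction hx using Submodule.span_induction with
      | mem a ha =>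
        obtain ⟨j, hj⟩ := Set.mem_iUnion.mp (hunion ▸ hΔ.subset ha)
        rcases eq_or_ne j i with rfl | hne'
        · rw [hπroot j a hj]; exact Submodule.subset_span ⟨ha, hj⟩
        · rw [hπroot' j i hne' a hj]; exact Submodule.zero_mem _
      | zero => rw [map_zero]; exact Submodule.zero_mem _
      | add a a' _ _ h1 h2 => rw [map_add]; exact Submodule.add_mem _ h1 h2
      | smul r a _ h1 => rw [map_smul]; exact Submodule.smul_mem _ _ h1
    have hαΔ : α ∈ Submodule.span ℚ Δ := by
      rw [hΔ.span_eq]; exact Submodule.subset_span (hmemΦ hα)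
    have h := hΔspan α hαΔ
    rwa [hπroot i α hα] at h
  have hμzero : ∀ (s : Set V), (∀ y ∈ s, μ y = 0) → ∀ x ∈ Submodule.span ℚ s, μ x = 0 := by
    intro s hs x hx
    induction hx using Submodule.span_induction with
    | mem a ha => exact hs a ha
    | zero => simp
    | add a a' _ _ h1 h2 => rw [map_add, h1, h2, add_zero]
    | smul r a _ h1 => rw [map_smul, h1, smul_zero]
  have huniq : ∀ i, ∀ β γ : V, β ∈ Δ ∩ Φc i → γ ∈ Δ ∩ Φc i →
      μ β ≠ 0 → μ γ ≠ 0 → β = γ := by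
    intro i β γ hβ hγ hμβ hμγ
    obtain ⟨hβΔ, hβc⟩ := hβ
    obtain ⟨hγΔ, hγc⟩ := hγ
    by_contra hne
    let G : SimpleGraph V :=
      { Adj := fun x y => x ≠ y ∧ x ∈ Δ ∧ y ∈ Δ ∧ B x y ≠ 0
        symm := ⟨by
          rintro x y ⟨ha, hb', hc', hd'⟩
          exact ⟨ha.symm, hc', hb', by rw [hsym]; exact hd'⟩⟩
        loopless := ⟨fun x h => h.1 rfl⟩ }
    have hGadj : ∀ {x y : V}, G.Adj x y → x ≠ y ∧ x ∈ Δ ∧ y ∈ Δ ∧ B x y ≠ 0 := fun h => h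
    set A : Set V := {x | x ∈ Δ ∧ G.Reachable β x} with hA
    have hAΔ : A ⊆ Δ := fun x hx => hx.1
    have horthA : ∀ δ ∈ A, ∀ δ' ∈ Δ, δ' ∉ A → B δ δ' = 0 := by
      intro δ hδ δ' hδ' hδ'A
      by_contra hB0
      rcases eq_or_ne δ δ' with rfl | hne'
      · exact hδ'A hδ
      · exact hδ'A ⟨hδ', hδ.2.trans (SimpleGraph.Adj.reachable ⟨hne', hδ.1, hδ', hB0⟩)⟩
    have hdich := QCP.dich hRS hΔ b hb hsym hposB hcoB hAΔ horthA
    have hspanzero : ∀ x ∈ Submodule.span ℚ A, ∀ y ∈ Submodule.span ℚ (Δ \ A), B x y = 0 := by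
      intro x hx
      induction hx using Submodule.span_induction with
      | mem a ha =>
        intro y hy
        induction hy using Submodule.span_induction with
        | mem a' ha' => exact horthA a ha a' ha'.1 ha'.2
        | zero => rw [map_zero]
        | add y1 y2 _ _ h1 h2 => rw [map_add, h1, h2, add_zero]
        | smul r y1 _ h1 => rw [map_smul, h1, smul_zero]
      | zero => intro y _; rw [map_zero]; rfl
      | add x1 x2 _ _ h1 h2 =>
        intro y hy
        rw [map_add, LinearMap.add_apply, h1 y hy, h2 y hy, add_zero]
      | smul r x1 _ h1 =>
        intro y hy
        rw [map_smul, LinearMap.smul_apply, h1 y hy, smul_zero]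
    have hmemspan : ∀ (x : V) (s : Set V),
        (∀ j : ↥Δ, (↑j : V) ∉ s → b.repr x j = 0) → x ∈ Submodule.span ℚ s := by
      intro x s h
      have hx : x = ∑ j : ↥Δ, b.repr x j • b j := (Module.Basis.sum_repr b x).symm
      rw [hx]
      apply Submodule.sum_mem
      intro j _
      by_cases hj : (↑j : V) ∈ s
      · apply Submodule.smul_mem
        apply Submodule.subset_span
        rw [hb j]; exact hj
      · rw [h j hj, zero_smul]; exact Submodule.zero_mem _
    set Ψ : Set V := {α | α ∈ Φc i ∧ α ∈ Submodule.span ℚ A} with hΨ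
    have hΨorth : ∀ α ∈ Ψ, ∀ α' ∈ Φc i \ Ψ, co α α' = 0 := by
      intro α hαΨ α' hα'
      have hα'Φ : α' ∈ Φ := hmemΦ hα'.1
      have hαΦ : α ∈ Φ := hmemΦ hαΨ.1
      have hα'span : α' ∈ Submodule.span ℚ (Δ \ A) := by
        rcases hdich α' hα'Φ with h | h
        · exact absurd ⟨hα'.1, hmemspan α' A h⟩ hα'.2
        · apply hmemspan
          intro j hj
          have hjA : (↑j : V) ∈ A := by
            by_contra hjA
            exact hj ⟨j.2, hjA⟩
          exact h j hjA
      have h0 : co α α' * B α α = 0 := by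
        rw [hcoB hαΦ α', hspanzero α hαΨ.2 α' hα'span, mul_zero]
      exact (mul_eq_zero.mp h0).resolve_right
        (ne_of_gt (hposB α (hRS.ne_zero α hαΦ)))
    have hβΨ : β ∈ Ψ := ⟨hβc, Submodule.subset_span ⟨hβΔ, SimpleGraph.Reachable.refl β⟩⟩
    rcases (hirr i).2 Ψ (fun a ha => ha.1) hΨorth with hemp | hfull
    · rw [hemp] at hβΨ; exact hβΨ
    · have hγΨ : γ ∈ Ψ := by rw [hfull]; exact hγc
      have hAsupp : ∀ x ∈ Submodule.span ℚ A, ∀ j : ↥Δ, (↑j : V) ∉ A → b.repr x j = 0 := by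
        intro x hx
        induction hx using Submodule.span_induction with
        | mem a ha =>
          intro j hj
          have haΔ : a ∈ Δ := hAΔ ha
          have h0 := Module.Basis.repr_self_apply b ⟨a, haΔ⟩ j
          rw [hb ⟨a, haΔ⟩] at h0
          rw [h0, if_neg]
          intro hh
          apply hj
          rw [← congrArg Subtype.val hh]; exact ha
        | zero => intro j _; simp
        | add x1 x2 _ _ h1 h2 =>
          intro j hj
          rw [map_add, Finsupp.add_apply, h1 j hj, h2 j hj, add_zero]
        | smul r x1 _ h1 =>
          intro j hj
          rw [map_smul, Finsupp.smul_apply, h1 j hj, smul_zero]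
      have hγA : γ ∈ A := by
        by_contra hγA
        have h := hAsupp γ hγΨ.2 ⟨γ, hγΔ⟩ hγA
        have h0 := Module.Basis.repr_self_apply b ⟨γ, hγΔ⟩ ⟨γ, hγΔ⟩
        rw [hb ⟨γ, hγΔ⟩] at h0
        rw [h0, if_pos rfl] at h
        exact one_ne_zero h
      obtain ⟨p0⟩ := hγA.2
      let pp := p0.toPath
      have hd0 : ∀ z ∈ pp.1.support.tail, z ∉ (∅ : Finset V) ∧ z ≠ β := by
        intro z hz
        refine ⟨by simp, ?_⟩
        have hnodup := pp.2.support_nodup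
        rw [pp.1.support_eq_cons] at hnodup
        intro hzβ
        exact (List.nodup_cons.mp hnodup).1 (hzβ ▸ hz)
      obtain ⟨w', hw', S', m', heq, hm', hS'Δ, hg⟩ :=
        QCP.chain hRS hsym hposB hcoB hΔ.subset hobt hGadj hβΔ pp.1 pp.2
          1 (one_mem _) ∅ (fun _ => 0) (by simp) (by simp) (by simp) (Or.inl rfl) hd0
      have hγS' : γ ∈ S' := by
        rcases hg with h | h
        · exact absurd h.symm hne
        · exact h
      have hμw : μ β < μ (w' β) := by
        rw [heq, map_add, map_sum]
        have hcong : ∀ s ∈ S', μ (m' s • s) = m' s * μ s := fun s _ => by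
          rw [map_smul, smul_eq_mul]
        rw [Finset.sum_congr rfl hcong]
        have hterm : 0 < m' γ * μ γ :=
          mul_pos (hm' γ hγS') (lt_of_le_of_ne (hdom γ hγΔ) (Ne.symm hμγ))
        have hsum : m' γ * μ γ ≤ ∑ s ∈ S', m' s * μ s :=
          Finset.single_le_sum
            (fun s hs => mul_nonneg (le_of_lt (hm' s hs)) (hdom s (hS'Δ hs))) hγS'
        linarith
      have hr := hqc β (hΔ.subset hβΔ) hμβ w' hw'
      simp only [Set.mem_insert_iff, Set.mem_singleton_iff] at hr
      have hcancel : μ (w' β) = μ (w' β) / μ β * μ β := (div_mul_cancel₀ _ hμβ).symm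
      have hμβpos : 0 < μ β := lt_of_le_of_ne (hdom β hβΔ) (Ne.symm hμβ)
      rcases hr with h | h | h <;> rw [h] at hcancel <;> linarith
  refine ⟨?_, ?_⟩
  · intro i hμi
    have hex : ∃ x, μ (π i x) ≠ 0 := by
      by_contra h; push_neg at h
      exact hμi (LinearMap.ext fun x => h x)
    obtain ⟨x, hx⟩ := hex
    have h1 : ∃ α ∈ Φc i, μ α ≠ 0 := by
      by_contra h; push_neg at h
      exact hx (hμzero (Φc i) h _ (hπspan i x))
    obtain ⟨α, hαi, hμα⟩ := h1
    have h2 : ∃ δ, δ ∈ Δ ∩ Φc i ∧ μ δ ≠ 0 := by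
      by_contra h; push_neg at h
      exact hμα (hμzero (Δ ∩ Φc i) h α (hspanΔi i α hαi))
    obtain ⟨δ, hδmem, hμδ⟩ := h2
    exact ⟨δ, ⟨hδmem, hμδ⟩, fun y hy => huniq i y δ hy.1 hδmem hy.2 hμδ⟩
  · intro χ hχ
    constructor
    · intro α hα hcoχ σ hσ
      rw [← hRS.weyl_coroot σ hσ α hα]
      obtain ⟨i, hαi⟩ := Set.mem_iUnion.mp (hunion ▸ hα)
      obtain ⟨t, ht0, hBt⟩ : ∃ t : ℚ, t ≠ 0 ∧
          ∀ x ∈ Submodule.span ℚ (Δ ∩ Φc i), B x χ = t * μ x := by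
        have hstep : ∃ t : ℚ, t ≠ 0 ∧ ∀ δ ∈ Δ ∩ Φc i, B δ χ = t * μ δ := by
          by_cases hcase : ∃ δ₀, δ₀ ∈ Δ ∩ Φc i ∧ μ δ₀ ≠ 0
          · obtain ⟨δ₀, hδ₀, hμδ₀⟩ := hcase
            have hδ₀Φ : δ₀ ∈ Φ := hΔ.subset hδ₀.1
            have hBδ₀ : 0 < B δ₀ δ₀ := hposB δ₀ (hRS.ne_zero δ₀ hδ₀Φ)
            refine ⟨B δ₀ δ₀ / (2 * μ δ₀),
              div_ne_zero (ne_of_gt hBδ₀) (mul_ne_zero two_ne_zero hμδ₀), ?_⟩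
            intro δ hδmem
            by_cases hμδ : μ δ = 0
            · have hc0 : co δ χ = 0 := by
                rw [hχ δ hδmem.1, if_neg (not_not_intro hμδ)]
              have h := hcoB (hΔ.subset hδmem.1) χ
              rw [hc0, zero_mul] at h
              rw [hμδ, mul_zero]
              linarith
            · have hδeq : δ = δ₀ := huniq i δ δ₀ hδmem hδ₀ hμδ hμδ₀
              subst hδeq
              have hc1 : co δ χ = 1 := by rw [hχ δ hδmem.1, if_pos hμδ]
              have h := hcoB (hΔ.subset hδmem.1) χ
              rw [hc1, one_mul] at h
              have hBχ : B δ χ = B δ δ / 2 := by linarith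
              rw [hBχ, div_mul_eq_mul_div, div_eq_div_iff two_ne_zero
                (mul_ne_zero two_ne_zero hμδ)]
              ring
          · push_neg at hcase
            refine ⟨1, one_ne_zero, ?_⟩
            intro δ hδmem
            have hμδ := hcase δ hδmem
            have hc0 : co δ χ = 0 := by
              rw [hχ δ hδmem.1, if_neg (not_not_intro hμδ)]
            have h := hcoB (hΔ.subset hδmem.1) χ
            rw [hc0, zero_mul] at h
            rw [hμδ, mul_zero]
            linarith
        obtain ⟨t, ht0, ht⟩ := hstep
        refine ⟨t, ht0, ?_⟩
        intro x hx
        induction hx using Submodule.span_induction with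
        | mem a ha => exact ht a ha
        | zero => simp
        | add x1 x2 _ _ h1 h2 =>
          rw [map_add, LinearMap.add_apply, map_add, h1, h2]; ring
        | smul r x1 _ h1 =>
          rw [map_smul, LinearMap.smul_apply, map_smul, h1, smul_eq_mul, smul_eq_mul]; ring
      have hσα : σ α ∈ Φc i := hWcomp i σ hσ α hαi
      have hσαΦ : σ α ∈ Φ := hRS.weyl_root σ hσ α hα
      have e1 : co α χ * B α α = 2 * (t * μ α) := by
        rw [hcoB hα χ, hBt α (hspanΔi i α hαi)]
      have e2 : co (σ α) χ * B α α = 2 * (t * μ (σ α)) := by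
        have h := hcoB hσαΦ χ
        rw [hinv σ hσ α α] at h
        rw [h, hBt _ (hspanΔi i _ hσα)]
      have hBαα : B α α ≠ 0 := ne_of_gt (hposB α (hRS.ne_zero α hα))
      have hμα : μ α ≠ 0 := by
        intro h0
        apply hcoχ
        have h : co α χ * B α α = 0 := by rw [e1, h0]; ring
        exact (mul_eq_zero.mp h).resolve_right hBαα
      have hratio : co (σ α) χ / co α χ = μ (σ α) / μ α := by
        rw [div_eq_div_iff hcoχ hμα]
        have h3 : co (σ α) χ * μ α * B α α = μ (σ α) * co α χ * B α α := by
          linear_combination μ α * e2 - μ (σ α) * e1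
        exact mul_right_cancel₀ hBαα h3
      rw [hratio]
      exact hqc α hα hμα σ hσ
    · intro α hαΔ
      have h := hχ α hαΔ
      by_cases hμα : μ α ≠ 0
      · rw [if_pos hμα] at h
        constructor
        · intro _; exact hμα
        · intro _; rw [h]; exact one_ne_zero
      · rw [if_neg hμα] at h
        constructor
        · intro hc; exact absurd h hc
        · intro hc; exact absurd hc hμα
end

section
/- Let Φ be a reduced irreducible root system spanning V with base Δ, let p be a prime number, let S ⊆ Δ, and set η_S := Σ_{α∈S} η(α). Assume either that Φ is simply-laced (the Weyl group W acts transitively on Φ) or that S contains a short root. Then η_S is orbitally p-close if and only if ⟨η_S, ʰα∨⟩ ≤ p − 1, where ʰα∨ is the highest coroot with respect to Δ. -/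
namespace Aux
open QC
variable {V : Type*} [AddCommGroup V] [Module ℚ V]

noncomputable def reflMap (co : V → Module.Dual ℚ V) (β : V) : V →ₗ[ℚ] V :=
  LinearMap.id - (LinearMap.smulRight (co β) β)

lemma reflMap_invol (co : V → Module.Dual ℚ V) (β : V) (h2 : co β β = 2) :
    Function.Involutive (reflMap co β) := by
  intro x
  show (x - co β x • β) - co β (x - co β x • β) • β = x
  simp only [map_sub, map_smul, h2, smul_eq_mul, sub_smul, mul_smul]
  module

noncomputable def refl (co : V → Module.Dual ℚ V) (β : V) (h2 : co β β = 2) : V ≃ₗ[ℚ] V :=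
  LinearEquiv.ofInvolutive (reflMap co β) (reflMap_invol co β h2)

@[simp] lemma refl_apply (co : V → Module.Dual ℚ V) (β : V) (h2 : co β β = 2) (x : V) :
    refl co β h2 x = x - co β x • β := rfl

@[simp] lemma refl_symm_apply (co : V → Module.Dual ℚ V) (β : V) (h2 : co β β = 2) (x : V) :
    (refl co β h2).symm x = x - co β x • β := rfl

lemma coact_apply (w : V ≃ₗ[ℚ] V) (f : Module.Dual ℚ V) (x : V) :
    QC.coact w f x = f (w.symm x) := rfl

lemma mul_apply (a b : V ≃ₗ[ℚ] V) (x : V) : (a * b) x = a (b x) := rfl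

lemma finsupp_sum_eval (co : V → Module.Dual ℚ V) (c : V →₀ ℕ) (x : V) :
    (c.sum fun v n => (n:ℚ) • co v) x = ∑ v ∈ c.support, (c v : ℚ) * co v x := by
  simp [Finsupp.sum, smul_eq_mul]

variable {Φ : Set V} {co : V → Module.Dual ℚ V}

lemma refl_mem_weyl (hRS : IsRootSystem Φ co) {β : V} (hβ : β ∈ Φ) :
    refl co β (hRS.pair_self β hβ) ∈ weylGroup Φ co :=
  Subgroup.subset_closure ⟨β, hβ, fun _ => rfl⟩

lemma refl_self (hRS : IsRootSystem Φ co) {β : V} (hβ : β ∈ Φ) :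
    refl co β (hRS.pair_self β hβ) β = -β := by
  simp [hRS.pair_self β hβ, two_smul]

lemma neg_mem (hRS : IsRootSystem Φ co) {β : V} (hβ : β ∈ Φ) : -β ∈ Φ := by
  have := hRS.weyl_root _ (refl_mem_weyl hRS hβ) β hβ
  rwa [refl_self hRS hβ] at this

lemma co_neg (hRS : IsRootSystem Φ co) {β : V} (hβ : β ∈ Φ) (x : V) :
    co (-β) x = - co β x := by
  have h := hRS.weyl_coroot _ (refl_mem_weyl hRS hβ) β hβ
  rw [refl_self hRS hβ] at h
  rw [h, coact_apply, refl_symm_apply]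
  simp [hRS.pair_self β hβ, mul_comm]
  ring

lemma co_eval_B (hRS : IsRootSystem Φ co) (B : V →ₗ[ℚ] V →ₗ[ℚ] ℚ)
    (hBsymm : ∀ x y : V, B x y = B y x)
    (hBinv : ∀ w, w ∈ weylGroup Φ co → ∀ x y : V, B (w x) (w y) = B x y)
    {β : V} (hβ : β ∈ Φ) (x : V) : co β x * B β β = 2 * B β x := by
  have h := hBinv _ (refl_mem_weyl hRS hβ) x β
  rw [refl_self hRS hβ, refl_apply] at h
  simp only [map_sub, map_smul, map_neg, LinearMap.sub_apply, LinearMap.smul_apply,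
    LinearMap.neg_apply, smul_eq_mul] at h
  have hs := hBsymm x β
  nlinarith [h]

lemma vee_eval (hRS : IsRootSystem Φ co) (B : V →ₗ[ℚ] V →ₗ[ℚ] ℚ)
    (hBsymm : ∀ x y : V, B x y = B y x)
    (hBpos : ∀ x : V, x ≠ 0 → 0 < B x x)
    (hBinv : ∀ w, w ∈ weylGroup Φ co → ∀ x y : V, B (w x) (w y) = B x y)
    {γ : V} (hγ : γ ∈ Φ) (x : V) : B ((2 / B γ γ) • γ) x = co γ x := by
  have hpos := hBpos γ (hRS.ne_zero γ hγ)
  simp only [map_smul, LinearMap.smul_apply, smul_eq_mul]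
  rw [div_mul_eq_mul_div, eq_comm, eq_div_iff hpos.ne']
  linarith [co_eval_B hRS B hBsymm hBinv hγ x]

lemma theta_short (hRS : IsRootSystem Φ co)
    (B : V →ₗ[ℚ] V →ₗ[ℚ] ℚ) (hBsymm : ∀ x y : V, B x y = B y x)
    (hBpos : ∀ x : V, x ≠ 0 → 0 < B x x)
    (hBinv : ∀ w, w ∈ weylGroup Φ co → ∀ x y : V, B (w x) (w y) = B x y)
    {Δ : Set V} (hΔ : IsBase Φ co Δ)
    (η : V → V) (hη : ∀ α ∈ Δ, IsFundWeight co Δ α (η α))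
    {θ : V} (hθ : θ ∈ Φ)
    (hθhigh : ∀ β ∈ Φ, ∃ c : V →₀ ℕ, ↑c.support ⊆ Δ ∧
        co θ - co β = c.sum fun v n => (n : ℚ) • co v) :
    ∀ β ∈ Φ, B θ θ ≤ B β β := by
  have hΔΦ := hΔ.subset
  have hΔfin : Δ.Finite := hRS.finite.subset hΔΦ
  set ρ : V := ∑ v ∈ hΔfin.toFinset, η v with hρ
  have hcoρ : ∀ v ∈ Δ, co v ρ = 1 := by
    intro v hv
    rw [hρ, map_sum, Finset.sum_congr rfl (fun u hu => hη u (hΔfin.mem_toFinset.1 hu) v hv)]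
    classical
    rw [Finset.sum_ite_eq hΔfin.toFinset v (fun _ => (1:ℚ))]
    simp [hΔfin.mem_toFinset, hv]
  have hdomθ : ∀ v ∈ Δ, 0 ≤ co θ v := by
    intro v hv
    have hvΦ := hΔΦ hv
    have h2 := hRS.pair_self v hvΦ
    have hsv := refl_mem_weyl hRS hvΦ
    have hsθΦ : refl co v h2 θ ∈ Φ := hRS.weyl_root _ hsv θ hθ
    obtain ⟨c, hcs, hc⟩ := hθhigh _ hsθΦ
    have heval := congrArg (fun f : Module.Dual ℚ V => f (η v)) hc
    simp only [LinearMap.sub_apply] at heval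
    rw [finsupp_sum_eval] at heval
    have h1 : co v (η v) = 1 := by rw [hη v hv v hv]; simp
    have hLHS : co (refl co v h2 θ) (η v) = co θ (η v) - co θ v := by
      rw [hRS.weyl_coroot _ hsv θ hθ, coact_apply, refl_symm_apply, map_sub, map_smul, h1,
        one_smul]
    rw [hLHS] at heval
    have hterm : ∀ u ∈ c.support, 0 ≤ (c u : ℚ) * co u (η v) := by
      intro u hu
      rw [hη v hv u (hcs hu)]
      split <;> simp
    have := Finset.sum_nonneg hterm
    linarith [heval]
  intro β hβ
  set O : Set V := {x | ∃ w ∈ weylGroup Φ co, w β = x} with hO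
  have hOΦ : O ⊆ Φ := by rintro x ⟨w, hw, rfl⟩; exact hRS.weyl_root w hw β hβ
  have hOfin : O.Finite := hRS.finite.subset hOΦ
  have hOne : O.Nonempty := ⟨β, 1, one_mem _, rfl⟩
  obtain ⟨β', hβ'O, hmax⟩ := Set.exists_max_image O (fun x => co x ρ) hOfin hOne
  obtain ⟨w, hwW, hwβ⟩ := hβ'O
  have hβ'Φ : β' ∈ Φ := hOΦ ⟨w, hwW, hwβ⟩
  have hBβ' : B β' β' = B β β := by rw [← hwβ]; exact hBinv w hwW β β
  have hdomβ' : ∀ v ∈ Δ, 0 ≤ co β' v := by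
    intro v hv
    have hvΦ := hΔΦ hv
    have h2 := hRS.pair_self v hvΦ
    have hsO : refl co v h2 β' ∈ O :=
      ⟨refl co v h2 * w, mul_mem (refl_mem_weyl hRS hvΦ) hwW, by rw [mul_apply, hwβ]⟩
    have hle := hmax _ hsO
    rw [hRS.weyl_coroot _ (refl_mem_weyl hRS hvΦ) β' hβ'Φ, coact_apply, refl_symm_apply,
      map_sub, map_smul, hcoρ v hv, one_smul] at hle
    linarith [hle]
  have hBθθ : 0 < B θ θ := hBpos θ (hRS.ne_zero θ hθ)
  have hBβ'β' : 0 < B β' β' := hBpos β' (hRS.ne_zero β' hβ'Φ)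
  set aθ : V := (2 / B θ θ) • θ with haθdef
  set aβ : V := (2 / B β' β') • β' with haβdef
  have haθ : ∀ x, B aθ x = co θ x := vee_eval hRS B hBsymm hBpos hBinv hθ
  have haβ : ∀ x, B aβ x = co β' x := vee_eval hRS B hBsymm hBpos hBinv hβ'Φ
  obtain ⟨c, hcs, hc⟩ := hθhigh β' hβ'Φ
  have hveeθ : aθ = aβ + ∑ v ∈ c.support, (c v : ℚ) • ((2 / B v v) • v) := by
    rw [← sub_eq_zero]
    by_contra hne
    have hkey : ∀ x : V,
        B (aθ - (aβ + ∑ v ∈ c.support, (c v : ℚ) • ((2 / B v v) • v))) x = 0 := by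
      intro x
      have heval := congrArg (fun f : Module.Dual ℚ V => f x) hc
      simp only [LinearMap.sub_apply] at heval
      rw [finsupp_sum_eval] at heval
      have hsum : ∀ v ∈ c.support, B ((c v : ℚ) • ((2 / B v v) • v)) x = (c v : ℚ) * co v x := by
        intro v hv
        rw [map_smul, LinearMap.smul_apply, smul_eq_mul,
          vee_eval hRS B hBsymm hBpos hBinv (hΔΦ (hcs hv)) x]
      simp only [map_sub, map_add, map_sum, LinearMap.sub_apply, LinearMap.add_apply,
        LinearMap.sum_apply]
      rw [Finset.sum_congr rfl hsum, haθ x, haβ x]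
      linarith [heval]
    exact (hBpos _ hne).ne' (hkey _)
  have hterm : ∀ y : V, B y (aβ + ∑ v ∈ c.support, (c v : ℚ) • ((2 / B v v) • v)) =
      B y aβ + ∑ v ∈ c.support, (c v : ℚ) * (2 / B v v * B y v) := by
    intro y
    simp only [map_add, map_sum, map_smul, smul_eq_mul]
  have hsupnn : ∀ v ∈ c.support, (0:ℚ) ≤ 2 / B v v := fun v hv =>
    le_of_lt (div_pos two_pos (hBpos v (hRS.ne_zero v (hΔΦ (hcs hv)))))
  have e4 : B aθ aβ ≤ B aθ aθ := by
    have hexp := (congrArg (B aθ) hveeθ).trans (hterm aθ)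
    have hnn : (0:ℚ) ≤ ∑ v ∈ c.support, (c v : ℚ) * (2 / B v v * B aθ v) := by
      apply Finset.sum_nonneg
      intro v hv
      exact mul_nonneg (by positivity) (mul_nonneg (hsupnn v hv) (by
        rw [haθ v]; exact hdomθ v (hcs hv)))
    linarith [hexp, hnn]
  have e3 : B aβ aβ ≤ B aθ aβ := by
    have hexp := (congrArg (B aβ) hveeθ).trans (hterm aβ)
    have hnn : (0:ℚ) ≤ ∑ v ∈ c.support, (c v : ℚ) * (2 / B v v * B aβ v) := by
      apply Finset.sum_nonneg
      intro v hv
      exact mul_nonneg (by positivity) (mul_nonneg (hsupnn v hv) (by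
        rw [haβ v]; exact hdomβ' v (hcs hv)))
    have := hBsymm aθ aβ
    linarith [hexp, hnn]
  have eθ : B aθ aθ = 2 * (2 / B θ θ) := by
    rw [haθ aθ, haθdef, map_smul, smul_eq_mul, hRS.pair_self θ hθ]
    ring
  have eβ : B aβ aβ = 2 * (2 / B β' β') := by
    rw [haβ aβ, haβdef, map_smul, smul_eq_mul, hRS.pair_self β' hβ'Φ]
    ring
  have hfin : 2 * (2 / B β' β') ≤ 2 * (2 / B θ θ) := by
    rw [← eβ, ← eθ]; linarith [e3, e4]
  rw [← hBβ']
  have hr1 : 2 * (2 / B β' β') = 4 / B β' β' := by ring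
  have hr2 : 2 * (2 / B θ θ) = 4 / B θ θ := by ring
  have h44 : 4 / B β' β' ≤ 4 / B θ θ := by linarith [hfin]
  rw [div_le_div_iff₀ hBβ'β' hBθθ] at h44
  linarith [h44]

lemma short_conj (hRS : IsRootSystem Φ co) (hirr : IsIrreducible Φ co)
    (B : V →ₗ[ℚ] V →ₗ[ℚ] ℚ) (hBsymm : ∀ x y : V, B x y = B y x)
    (hBpos : ∀ x : V, x ≠ 0 → 0 < B x x)
    (hBinv : ∀ w, w ∈ weylGroup Φ co → ∀ x y : V, B (w x) (w y) = B x y)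
    {α₀ θ : V} (hα₀ : α₀ ∈ Φ) (hθΦ : θ ∈ Φ)
    (hshortα : ∀ β ∈ Φ, B α₀ α₀ ≤ B β β) (hshortθ : ∀ β ∈ Φ, B θ θ ≤ B β β) :
    ∃ w ∈ weylGroup Φ co, w α₀ = θ := by
  classical
  set O : Set V := {x | ∃ w ∈ weylGroup Φ co, w α₀ = x} with hO
  have hOΦ : O ⊆ Φ := by rintro x ⟨w, hw, rfl⟩; exact hRS.weyl_root w hw α₀ hα₀
  set U : Submodule ℚ V := Submodule.span ℚ O with hU
  have horto : ∀ γ ∈ Φ, γ ∉ U → ∀ δ ∈ O, co γ δ = 0 := by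
    intro γ hγ hγU δ hδ
    by_contra hne
    obtain ⟨w, hw, hwa⟩ := hδ
    have h2 := hRS.pair_self γ hγ
    have hsO : refl co γ h2 δ ∈ O :=
      ⟨refl co γ h2 * w, mul_mem (refl_mem_weyl hRS hγ) hw, by rw [mul_apply, hwa]⟩
    have h1 : δ ∈ U := Submodule.subset_span ⟨w, hw, hwa⟩
    have h2' : δ - co γ δ • γ ∈ U := Submodule.subset_span hsO
    have h3 : co γ δ • γ ∈ U := by
      have := Submodule.sub_mem U h1 h2'
      simpa using this
    have h4 : γ ∈ U := by
      have := Submodule.smul_mem U (co γ δ)⁻¹ h3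
      rwa [smul_smul, inv_mul_cancel₀ hne, one_smul] at this
    exact hγU h4
  have hBker : ∀ γ : V, (∀ δ ∈ O, B γ δ = 0) → ∀ u ∈ U, B γ u = 0 := by
    intro γ hγ u hu
    have hle : U ≤ LinearMap.ker (B γ) := Submodule.span_le.2 fun δ hδ =>
      LinearMap.mem_ker.2 (hγ δ hδ)
    exact hle hu
  have hΨ : ∀ a ∈ (Φ ∩ ↑U : Set V), ∀ b ∈ Φ \ (Φ ∩ ↑U), co a b = 0 := by
    intro a ha b hb
    have hbΦ : b ∈ Φ := hb.1
    have hbU : b ∉ U := fun h => hb.2 ⟨hbΦ, h⟩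
    have hBb : ∀ u ∈ U, B b u = 0 := by
      apply hBker
      intro δ hδ
      have h0 := horto b hbΦ hbU δ hδ
      have hco := co_eval_B hRS B hBsymm hBinv hbΦ δ
      rw [h0, zero_mul] at hco
      linarith [hco]
    have hBba : B b a = 0 := hBb a ha.2
    have hco := co_eval_B hRS B hBsymm hBinv ha.1 b
    have haa : B a a ≠ 0 := (hBpos a (hRS.ne_zero a ha.1)).ne'
    rw [hBsymm a b, hBba, mul_zero] at hco
    exact (mul_eq_zero.1 hco).resolve_right haa
  rcases hirr.2 (Φ ∩ ↑U) Set.inter_subset_left hΨ with h | h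
  · exact absurd (show α₀ ∈ Φ ∩ ↑U from
      ⟨hα₀, Submodule.subset_span ⟨1, one_mem _, rfl⟩⟩) (by simp [h])
  · have hθU : θ ∈ U := by
      have h1 : θ ∈ Φ ∩ ↑U := by rw [h]; exact hθΦ
      exact h1.2
    obtain ⟨δ, hδO, hBδ⟩ : ∃ δ ∈ O, B θ δ ≠ 0 := by
      by_contra hall
      push_neg at hall
      exact (hBpos θ (hRS.ne_zero θ hθΦ)).ne' (hBker θ hall θ hθU)
    obtain ⟨w, hwW, hwδ⟩ := hδO
    have hδΦ : δ ∈ Φ := hOΦ ⟨w, hwW, hwδ⟩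
    have hBδδ : B δ δ = B α₀ α₀ := by rw [← hwδ]; exact hBinv w hwW α₀ α₀
    have hlen : B δ δ = B θ θ := by
      refine le_antisymm ?_ (hshortθ δ hδΦ)
      rw [hBδδ]; exact hshortα θ hθΦ
    have hθθpos := hBpos θ (hRS.ne_zero θ hθΦ)
    have h2θ := hRS.pair_self θ hθΦ
    have h2δ := hRS.pair_self δ hδΦ
    have hco1 := co_eval_B hRS B hBsymm hBinv hθΦ δ
    have hco2 := co_eval_B hRS B hBsymm hBinv hδΦ θ
    have hkeq : co δ θ = co θ δ := by
      rw [hlen, hBsymm δ θ] at hco2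
      exact mul_right_cancel₀ hθθpos.ne' (hco2.trans hco1.symm)
    by_cases hd : δ - (B δ θ / B θ θ) • θ = 0
    · have hδt : δ = (B δ θ / B θ θ) • θ := by rwa [sub_eq_zero] at hd
      have htΦ : (B δ θ / B θ θ) • θ ∈ Φ := hδt ▸ hδΦ
      rcases hRS.reduced θ hθΦ _ htΦ with ht1 | ht1
      · exact ⟨w, hwW, by rw [hwδ, hδt, ht1, one_smul]⟩
      · refine ⟨refl co θ h2θ * w, mul_mem (refl_mem_weyl hRS hθΦ) hwW, ?_⟩
        rw [mul_apply, hwδ, hδt, ht1, neg_one_smul, refl_apply]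
        simp only [map_neg, h2θ]
        module
    · have hdd := hBpos _ hd
      have hBsym := hBsymm θ δ
      have hexp : B (δ - (B δ θ / B θ θ) • θ) (δ - (B δ θ / B θ θ) • θ) =
          B δ δ - B δ θ ^ 2 / B θ θ := by
        simp only [map_sub, map_smul, LinearMap.sub_apply, LinearMap.smul_apply, smul_eq_mul]
        rw [hBsym]
        field_simp
        ring
      have hCS : B δ θ ^ 2 < B δ δ * B θ θ := by
        rw [hexp] at hdd
        have h1 : B δ θ ^ 2 / B θ θ < B δ δ := by linarith
        have h2 := (div_lt_iff₀ hθθpos).1 h1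
        linarith
      obtain ⟨n, hn⟩ := hRS.pair_int θ hθΦ δ hδΦ
      have hk0 : co θ δ ≠ 0 := by
        intro h0
        rw [h0, zero_mul] at hco1
        exact hBδ (by linarith [hco1])
      have hsq : (co θ δ * B θ θ)^2 = (2 * B θ δ)^2 := by rw [hco1]
      have hk2 : co θ δ * co θ δ < 4 := by
        by_contra hcon
        push_neg at hcon
        have hTT : 0 ≤ B θ θ * B θ θ := le_of_lt (mul_pos hθθpos hθθpos)
        have h1 : 4 * (B θ θ * B θ θ) ≤ (co θ δ * co θ δ) * (B θ θ * B θ θ) :=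
          mul_le_mul_of_nonneg_right hcon hTT
        have h2 : (co θ δ * co θ δ) * (B θ θ * B θ θ) = 4 * (B θ δ * B θ δ) := by
          linear_combination hsq
        have h3 : B δ θ ^ 2 < B θ θ * B θ θ := by
          calc B δ θ ^ 2 < B δ δ * B θ θ := hCS
          _ = B θ θ * B θ θ := by rw [hlen]
        have hD : B δ θ = B θ δ := hBsymm δ θ
        rw [hD] at h3
        nlinarith [h1, h2, h3]
      have hn1 : co θ δ = 1 ∨ co θ δ = -1 := by
        rw [hn] at hk2 hk0 ⊢
        have h4 : n * n < 4 := by exact_mod_cast hk2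
        have h0 : n ≠ 0 := by exact_mod_cast hk0
        have hb1 : -1 ≤ n := by nlinarith
        have hb2 : n ≤ 1 := by nlinarith
        have hn' : n = 1 ∨ n = -1 := by omega
        rcases hn' with h | h <;> rw [h] <;> norm_num
      rcases hn1 with hk | hk
      · have hk' : co δ θ = 1 := by rw [hkeq, hk]
        have s1 : refl co θ h2θ δ = δ - θ := by rw [refl_apply, hk, one_smul]
        have s2 : refl co δ h2δ (δ - θ) = -θ := by
          rw [refl_apply, map_sub, h2δ, hk']
          module
        have s3 : refl co θ h2θ (-θ) = θ := by
          rw [refl_apply, map_neg, h2θ]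
          module
        refine ⟨refl co θ h2θ * (refl co δ h2δ * (refl co θ h2θ * w)),
          mul_mem (refl_mem_weyl hRS hθΦ) (mul_mem (refl_mem_weyl hRS hδΦ)
            (mul_mem (refl_mem_weyl hRS hθΦ) hwW)), ?_⟩
        rw [mul_apply, mul_apply, mul_apply, hwδ, s1, s2, s3]
      · have hk' : co δ θ = -1 := by rw [hkeq, hk]
        have s1 : refl co θ h2θ δ = δ + θ := by
          rw [refl_apply, hk, neg_one_smul, sub_neg_eq_add]
        have s2 : refl co δ h2δ (δ + θ) = θ := by
          rw [refl_apply, map_add, h2δ, hk']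
          module
        refine ⟨refl co δ h2δ * (refl co θ h2θ * w),
          mul_mem (refl_mem_weyl hRS hδΦ) (mul_mem (refl_mem_weyl hRS hθΦ) hwW), ?_⟩
        rw [mul_apply, mul_apply, hwδ, s1, s2]

end Aux

/-- Lemma A.2(1) of the paper. Let `Φ` be irreducible spanning `V`
with base `Δ`, `p` a prime, `S ⊆ Δ`, and `η_S = Σ_{α ∈ S} η(α)`. If `Φ` is simply-laced
(`W` transitive on `Φ`) or `S` contains a short root, then `η_S` is orbitally `p`-close
iff `⟨η_S, ʰα∨⟩ ≤ p − 1` where `ʰα∨` is the highest coroot. -/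
theorem statement12 {V : Type*} [AddCommGroup V] [Module ℚ V] [FiniteDimensional ℚ V]
    (Φ : Set V) (co : V → Module.Dual ℚ V)
    (hRS : QC.IsRootSystem Φ co) (hirr : QC.IsIrreducible Φ co)
    (hspan : Submodule.span ℚ Φ = ⊤)
    (Δ : Set V) (hΔ : QC.IsBase Φ co Δ)
    (p : ℕ) (hp : p.Prime)
    -- a `W`-invariant inner product, used to compare root lengths
    (B : V →ₗ[ℚ] V →ₗ[ℚ] ℚ) (hBsymm : ∀ x y : V, B x y = B y x)
    (hBpos : ∀ x : V, x ≠ 0 → 0 < B x x)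
    (hBinv : ∀ w, w ∈ QC.weylGroup Φ co → ∀ x y : V, B (w x) (w y) = B x y)
    (S : Finset V) (hS : ↑S ⊆ Δ)
    (η : V → V) (hη : ∀ α ∈ Δ, QC.IsFundWeight co Δ α (η α))
    -- `θ ∈ Φ` is the root whose coroot `co θ` is the highest coroot `ʰα∨`
    (θ : V) (hθ : θ ∈ Φ)
    (hθhigh : ∀ β ∈ Φ, ∃ c : V →₀ ℕ, ↑c.support ⊆ Δ ∧
        co θ - co β = c.sum fun v n => (n : ℚ) • co v)
    -- `Φ` simply-laced, or `S` contains a short root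
    (hcase : (∀ α ∈ Φ, ∀ β ∈ Φ, ∃ w, w ∈ QC.weylGroup Φ co ∧ w α = β) ∨
      ∃ α ∈ S, ∀ β ∈ Φ, B α α ≤ B β β) :
    QC.IsOrbitallyPClose Φ co p (∑ α ∈ S, η α) ↔
      co θ (∑ α ∈ S, η α) ≤ (p : ℚ) - 1 := by
  classical
  set χ : V := ∑ α ∈ S, η α with hχ
  have hΔΦ := hΔ.subset
  have hcov : ∀ v ∈ Δ, co v χ = if v ∈ S then 1 else 0 := by
    intro v hv
    rw [hχ, map_sum, Finset.sum_congr rfl (fun α hα => hη α (hS hα) v hv),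
      Finset.sum_ite_eq S v (fun _ => (1:ℚ))]
  have hcov0 : ∀ v ∈ Δ, 0 ≤ co v χ := by
    intro v hv; rw [hcov v hv]; split <;> norm_num
  have hle : ∀ β ∈ Φ, co β χ ≤ co θ χ := by
    intro β hβ
    obtain ⟨c, hcs, hc⟩ := hθhigh β hβ
    have heval := congrArg (fun f : Module.Dual ℚ V => f χ) hc
    simp only [LinearMap.sub_apply] at heval
    rw [Aux.finsupp_sum_eval] at heval
    have hnn : 0 ≤ ∑ v ∈ c.support, (c v : ℚ) * co v χ :=
      Finset.sum_nonneg fun v hv => mul_nonneg (by positivity) (hcov0 v (hcs hv))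
    linarith [heval]
  have habs : ∀ β ∈ Φ, |co β χ| ≤ co θ χ := by
    intro β hβ
    have h1 := hle β hβ
    have h2 := hle (-β) (Aux.neg_mem hRS hβ)
    rw [Aux.co_neg hRS hβ χ] at h2
    rw [abs_le]; constructor <;> linarith
  have hθχ0 : 0 ≤ co θ χ := le_trans (abs_nonneg _) (habs θ hθ)
  have hΔne : Δ.Nonempty := by
    obtain ⟨α, hα⟩ := hirr.1
    obtain ⟨c, hcs, hdec⟩ := hΔ.decomp α hα
    rcases Set.eq_empty_or_nonempty Δ with h | h
    · exfalso
      rw [h, Set.subset_empty_iff, Finset.coe_eq_empty] at hcs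
      have hc0 : c = 0 := Finsupp.support_eq_empty.1 hcs
      rw [hc0] at hdec
      simp only [Finsupp.sum_zero_index, neg_zero] at hdec
      rcases hdec with h1 | h1 <;> exact hRS.ne_zero α hα h1
    · exact h
  obtain ⟨v₀, hv₀⟩ := hΔne
  have hdiffint : ∀ β ∈ Φ, ∃ n : ℤ, co θ χ - co β χ = n := by
    intro β hβ
    obtain ⟨c, hcs, hc⟩ := hθhigh β hβ
    have heval := congrArg (fun f : Module.Dual ℚ V => f χ) hc
    simp only [LinearMap.sub_apply] at heval
    rw [Aux.finsupp_sum_eval] at heval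
    refine ⟨∑ v ∈ c.support.filter (· ∈ S), (c v : ℤ), ?_⟩
    rw [heval, Finset.sum_congr rfl (fun v hv => by rw [hcov v (hcs hv)])]
    push_cast [Finset.sum_filter]
    exact Finset.sum_congr rfl fun v hv => by split <;> simp
  have hθint : ∃ n : ℤ, co θ χ = n := by
    obtain ⟨n, hn⟩ := hdiffint v₀ (hΔΦ hv₀)
    rw [hcov v₀ hv₀] at hn
    by_cases hv₀S : v₀ ∈ S
    · rw [if_pos hv₀S] at hn
      exact ⟨n + 1, by push_cast; linarith⟩
    · rw [if_neg hv₀S] at hn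
      exact ⟨n, by linarith⟩
  have hint : ∀ β ∈ Φ, ∃ n : ℤ, co β χ = n := by
    intro β hβ
    obtain ⟨n, hn⟩ := hdiffint β hβ
    obtain ⟨m, hm⟩ := hθint
    exact ⟨m - n, by push_cast; linarith⟩
  constructor
  · intro hclose
    rcases eq_or_ne (co θ χ) 0 with h0 | h0
    · rw [h0]
      have h2 : (2:ℚ) ≤ p := by exact_mod_cast hp.two_le
      linarith
    · have hSne : S.Nonempty := by
        rcases S.eq_empty_or_nonempty with h | h
        · exact absurd (by rw [hχ, h, Finset.sum_empty, map_zero]) h0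
        · exact h
      obtain ⟨w, hwW, α₀, hα₀S, hwα₀⟩ : ∃ w ∈ QC.weylGroup Φ co, ∃ α₀ ∈ S, w α₀ = θ := by
        rcases hcase with htrans | ⟨α₀, hα₀S, hshort⟩
        · obtain ⟨α₀, hα₀S⟩ := hSne
          obtain ⟨w, hwW, hw⟩ := htrans α₀ (hΔΦ (hS hα₀S)) θ hθ
          exact ⟨w, hwW, α₀, hα₀S, hw⟩
        · have hshortθ := Aux.theta_short hRS B hBsymm hBpos hBinv hΔ η hη hθ hθhigh
          obtain ⟨w, hwW, hw⟩ := Aux.short_conj hRS hirr B hBsymm hBpos hBinv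
            (hΔΦ (hS hα₀S)) hθ hshort hshortθ
          exact ⟨w, hwW, α₀, hα₀S, hw⟩
      have hα₀Δ := hS hα₀S
      have hα₀Φ := hΔΦ hα₀Δ
      have h1 : co α₀ χ = 1 := by rw [hcov α₀ hα₀Δ, if_pos hα₀S]
      have hkey := hclose α₀ hα₀Φ (by rw [h1]; norm_num) w hwW
      rwa [← hRS.weyl_coroot w hwW α₀ hα₀Φ, hwα₀, h1, div_one, abs_of_nonneg hθχ0] at hkey
  · intro hbound α hα hne w hwW
    rw [← hRS.weyl_coroot w hwW α hα]
    have hwα := hRS.weyl_root w hwW α hα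
    have h1 : |co (w α) χ| ≤ co θ χ := habs _ hwα
    have h2 : (1:ℚ) ≤ |co α χ| := by
      obtain ⟨n, hn⟩ := hint α hα
      rw [hn] at hne ⊢
      have hn0 : n ≠ 0 := by exact_mod_cast hne
      have h1n : 1 ≤ |n| := Int.one_le_abs hn0
      calc (1:ℚ) ≤ ((|n| : ℤ) : ℚ) := by exact_mod_cast h1n
        _ = |(n:ℚ)| := by push_cast; ring
    rw [abs_div]
    exact le_trans (div_le_self (abs_nonneg _) h2) (le_trans h1 hbound)
end
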